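/- arXiv:2410.22749 — 7 statements merged into one kernel-verified Lean document; each statement's English description precedes it below -/
import Mathlib

section
/- Fix an integer d ≥ 1, a real ε with 0 < ε ≤ 1/100, and δ with 0 < δ ≤ 1/2. Let n = ⌈d/(4ε)⌉, X = [n], and let H be the first Cantor class on X with parameter d, f* the all-* hypothesis, and D the distribution on X×Y drawing x uniformly from X and labeling it f*(x) = *. If m ≤ max( d/(16ε), ln(1/δ)/(8ε) ), then with probability at least δ over an i.i.d. sample S ~ D^m the following holds: there is a set B ⊆ [d] with |B|/n > ε such that for every x ∈ B, every finite number n' ≥ 1 of sub-training sequences S_1,…,S_{n'} of S, and every i ∈ [n'], A_bad(S_i)(x) ≠ *. Consequently every majority-vote classifier of A_bad(S_1),…,A_bad(S_{n'}) has D-error greater than ε, and even the list {A_bad(S_i)(x) : i ∈ [n']} omits the correct label on B. -/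
open MeasureTheory ENNReal
open scoped Classical

/-- The hypothesis `h_A` of the first Cantor class: `h_A x = A` if `x ∈ A`, else `*`
(encoded as `none`). -/
def cantorHyp {n : ℕ} (A : Finset (Fin n)) : Fin n → Option (Finset (Fin n)) :=
  fun x => if x ∈ A then some A else none

/-- The first Cantor class on `[n]` with parameter `d`. -/
def cantorClass (n d : ℕ) : Set (Fin n → Option (Finset (Fin n))) :=
  {h | ∃ A : Finset (Fin n), A.card ≤ d ∧ h = cantorHyp A}

/-- Points of `[n]` not appearing as a feature of the training sequence `S`. -/
def unseenSet {n : ℕ} (S : List (Fin n × Option (Finset (Fin n)))) : Finset (Fin n) :=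
  Finset.univ.filter fun x => ∀ p ∈ S, p.1 ≠ x

/-- The `min (d, |unseen|)` smallest unseen points. -/
def badSet (d : ℕ) {n : ℕ} (S : List (Fin n × Option (Finset (Fin n)))) : Finset (Fin n) :=
  (((unseenSet S).sort (· ≤ ·)).take d).toFinset

/-- The bad ERM learner `A_bad`. -/
def Abad (d : ℕ) {n : ℕ} (S : List (Fin n × Option (Finset (Fin n)))) :
    Fin n → Option (Finset (Fin n)) :=
  cantorHyp (badSet d S)

instance {n : ℕ} : MeasurableSpace (Option (Finset (Fin n))) := ⊤

/-- The uniform probability measure on `Fin n` (for `n ≥ 1`). -/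
noncomputable def uniformFin (n : ℕ) : Measure (Fin n) :=
  ((n : ℝ≥0∞))⁻¹ • Measure.count

/-- The hard distribution: `x` uniform on `[n]`, labeled by the all-`*` hypothesis. -/
noncomputable def cantorD (n : ℕ) : Measure (Fin n × Option (Finset (Fin n))) :=
  Measure.map (fun x => (x, none)) (uniformFin n)

/-- `y` is the unique strictly most frequent label among `f x` for `f ∈ fs`. -/
def StrictMode {X Y : Type*} (fs : List (X → Y)) (x : X) (y : Y) : Prop :=
  ∀ y' : Y, y' ≠ y →
    fs.countP (fun f => decide (f x = y')) < fs.countP (fun f => decide (f x = y))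

/-- `g` is a majority-vote classifier of the classifiers `fs`, where the value
`none` plays the role of the always-wrong symbol `⊥`. -/
def IsMajVote {X Y : Type*} (fs : List (X → Y)) (g : X → Option Y) : Prop :=
  ∀ x : X, (∀ y : Y, StrictMode fs x y → g x = some y) ∧
    ((¬ ∃ y : Y, StrictMode fs x y) → g x = none ∨ ∃ f ∈ fs, g x = some (f x))

/- ==================== auxiliary lemmas ==================== -/

lemma mem_badSet {d n : ℕ} (S' : List (Fin n × Option (Finset (Fin n)))) (x : Fin n)
    (hx : x ∈ unseenSet S') (hxd : (x : ℕ) < d) : x ∈ badSet d S' := by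
  classical
  set l := (unseenSet S').sort (· ≤ ·) with hl
  have hsor : l.Pairwise (· < ·) := (Finset.sortedLT_sort _).pairwise
  have hnd : l.Nodup := hsor.nodup
  have hxl : x ∈ l := by rw [hl, Finset.mem_sort]; exact hx
  by_contra hns
  have hxmem : x ∈ l.take d ∨ x ∈ l.drop d := by
    rw [← List.mem_append, List.take_append_drop]; exact hxl
  have hxdrop : x ∈ l.drop d := by
    rcases hxmem with h | h
    · exact absurd (by simpa [badSet] using h) hns
    · exact h
  have hpw : ∀ a ∈ l.take d, ∀ b ∈ l.drop d, a < b := by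
    have := hsor
    rw [← List.take_append_drop d l, List.pairwise_append] at this
    exact this.2.2
  have hlen : (l.take d).length = d := by
    rw [List.length_take, Nat.min_eq_left]
    by_contra hle
    push_neg at hle
    have : l.drop d = [] := List.drop_eq_nil_of_le (le_of_lt hle)
    rw [this] at hxdrop; simp at hxdrop
  have hsub : (l.take d).toFinset ⊆ Finset.Iio x := by
    intro a ha
    rw [Finset.mem_Iio]
    exact hpw a (List.mem_toFinset.mp ha) x hxdrop
  have hcard : (l.take d).toFinset.card = d := by
    rw [List.toFinset_card_of_nodup (hnd.sublist (List.take_sublist d l)), hlen]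
  have := Finset.card_le_card hsub
  rw [hcard, Fin.card_Iio] at this
  omega

lemma count_apply_set {α : Type*} [Fintype α] [MeasurableSpace α] [MeasurableSingletonClass α]
    (A : Set α) : Measure.count A = A.toFinset.card := by
  rw [Measure.count_apply_finite A (Set.toFinite A), (Set.toFinite A).toFinset_eq_toFinset]

instance uniformFin_finite (n : ℕ) : IsFiniteMeasure (uniformFin n) := by
  constructor
  rw [uniformFin, Measure.smul_apply, smul_eq_mul, count_apply_set]
  rcases Nat.eq_zero_or_pos n with h | h
  · subst h; simp
  · exact ENNReal.mul_lt_top (ENNReal.inv_lt_top.mpr (by exact_mod_cast h)) (by simp)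

instance cantorD_finite (n : ℕ) : IsFiniteMeasure (cantorD n) := by
  constructor
  rw [cantorD, Measure.map_apply Measurable.of_discrete MeasurableSet.of_discrete]
  exact measure_lt_top _ _

lemma uniformFin_apply (n : ℕ) (A : Set (Fin n)) :
    uniformFin n A = ((n : ℝ≥0∞))⁻¹ * A.toFinset.card := by
  rw [uniformFin, Measure.smul_apply, count_apply_set, smul_eq_mul]

lemma pi_uniform_eq (n m : ℕ) :
    Measure.pi (fun _ : Fin m => uniformFin n)
      = (((n : ℝ≥0∞)) ^ m)⁻¹ • Measure.count := by
  refine Measure.pi_eq fun s _ => ?_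
  rw [Measure.smul_apply, count_apply_set, smul_eq_mul]
  have htf : (Set.univ.pi s).toFinset = Fintype.piFinset fun i => (s i).toFinset := by
    ext v; simp [Set.mem_pi]
  rw [htf, Fintype.card_piFinset]
  push_cast
  rw [Finset.prod_congr rfl (fun i _ => uniformFin_apply n (s i)), Finset.prod_mul_distrib]
  simp [ENNReal.inv_pow]

lemma pi_cantorD_eq (n m : ℕ) :
    Measure.pi (fun _ : Fin m => cantorD n) =
      Measure.map (fun (v : Fin m → Fin n) (i : Fin m) =>
        ((v i), (none : Option (Finset (Fin n))))) (Measure.pi fun _ => uniformFin n) := by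
  refine Measure.pi_eq fun s _ => ?_
  rw [Measure.map_apply Measurable.of_discrete MeasurableSet.of_discrete]
  have hpre : (fun (v : Fin m → Fin n) (i : Fin m) =>
      ((v i), (none : Option (Finset (Fin n))))) ⁻¹' (Set.univ.pi s)
      = Set.univ.pi (fun i => (fun x : Fin n => (x, (none : Option (Finset (Fin n))))) ⁻¹' s i) := by
    ext v; simp [Set.mem_pi]
  rw [hpre, Measure.pi_pi]
  refine Finset.prod_congr rfl fun i _ => ?_
  rw [cantorD, Measure.map_apply Measurable.of_discrete MeasurableSet.of_discrete]

lemma nat_sub_pow_le (n m : ℕ) : n ^ m - (n - 1) ^ m ≤ m * n ^ (m - 1) := by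
  induction m with
  | zero => simp
  | succ k ih =>
    rcases Nat.eq_zero_or_pos k with hk | hk
    · subst hk; simp; omega
    rcases Nat.eq_zero_or_pos n with hn | hn
    · subst hn; simp
    have hck : n ^ (k - 1) * n = n ^ k := by
      rw [← pow_succ]; congr 1; omega
    have hb : (n - 1) ^ k ≤ n ^ k := Nat.pow_le_pow_left (by omega) k
    have e1 : n ^ (k + 1) = n * n ^ k := by ring
    have e2 : (n - 1) ^ (k + 1) = (n - 1) * (n - 1) ^ k := by ring
    have e3 : n * (n ^ k - (n - 1) ^ k) = n * n ^ k - n * (n - 1) ^ k := Nat.mul_sub n _ _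
    have e4 : n * (n ^ k - (n - 1) ^ k) ≤ n * (k * n ^ (k - 1)) := Nat.mul_le_mul_left n ih
    have e5 : n * (k * n ^ (k - 1)) = k * n ^ k := by rw [← hck]; ring
    have e6 : (n - 1) * (n - 1) ^ k + (n - 1) ^ k = n * (n - 1) ^ k := by
      have h7 : n - 1 + 1 = n := by omega
      calc (n - 1) * (n - 1) ^ k + (n - 1) ^ k = (n - 1 + 1) * (n - 1) ^ k := by ring
        _ = n * (n - 1) ^ k := by rw [h7]
    have e7 : n * (n - 1) ^ k ≤ n * n ^ k := Nat.mul_le_mul_left n hb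
    have e8 : (k + 1) * n ^ (k + 1 - 1) = k * n ^ k + n ^ k := by
      have : k + 1 - 1 = k := rfl
      rw [this]; ring
    rw [e1, e2, e8]
    omega

lemma arith_markov (t d a b : ℕ) (h1 : ¬ (t + 1 ≤ a)) (h2 : a + b = d) : d - t ≤ b := by
  omega

lemma arith_split (a b c : ℕ) (h1 : a + b = c) (h2 : 2 * b ≤ c) : c ≤ 2 * a := by
  omega

lemma pow_pred_mul (n m : ℕ) (hm : 0 < m) : n * n ^ (m - 1) = n ^ m := by
  rw [← pow_succ']
  congr 1
  omega

lemma numA (d m n t : ℕ) (ε : ℝ) (hε : 0 < ε) (hε' : ε ≤ 1 / 100) (hd1 : (1:ℝ) ≤ d)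
    (htle : (t:ℝ) ≤ ε * n) (hεn_ub : ε * n < (d:ℝ)/4 + ε) (htd : t < d)
    (hca : (m:ℝ) ≤ (d:ℝ) / (16 * ε)) (hn4 : (d:ℝ) / (4 * ε) ≤ n) :
    2 * d * m ≤ (d - t) * n := by
  have hdt2 : (d:ℝ)/2 ≤ (d:ℝ) - t := by linarith
  have h16 : (m:ℝ) * (16 * ε) ≤ d := by
    rw [← le_div_iff₀ (by positivity)]; exact hca
  have h4n : (d:ℝ) ≤ (n:ℝ) * (4 * ε) := by
    rw [← div_le_iff₀ (by positivity)]; exact hn4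
  have h4m : 4 * (m:ℝ) ≤ (n:ℝ) := by nlinarith
  have hreal : (2 * d * m : ℝ) ≤ ((d:ℝ) - t) * n := by nlinarith
  have hcast : ((d - t : ℕ) : ℝ) = (d:ℝ) - t := by
    rw [Nat.cast_sub (le_of_lt htd)]
  have h : (2 * d * m : ℝ) ≤ ((d - t : ℕ) : ℝ) * n := by rw [hcast]; exact hreal
  exact_mod_cast h

lemma numB (d m n t : ℕ) (ε δ : ℝ) (hε : 0 < ε) (hε' : ε ≤ 1 / 100)
    (hδ : 0 < δ) (hd1 : (1:ℝ) ≤ d)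
    (htle : (t:ℝ) ≤ ε * n) (ht1n : t + 1 < n) (hnposR : (0:ℝ) < n)
    (hcb : (m:ℝ) ≤ Real.log (1 / δ) / (8 * ε)) (hn4 : (d:ℝ) / (4 * ε) ≤ n) :
    δ ≤ (((n - (t+1) : ℕ) : ℝ) / n) ^ m := by
  set r : ℝ := ((n - (t+1) : ℕ) : ℝ) / n with hr
  have hrcast : ((n - (t+1) : ℕ) : ℝ) = (n:ℝ) - (t+1) := by
    rw [Nat.cast_sub (le_of_lt ht1n)]
    push_cast
    ring
  have h4n : (d:ℝ) ≤ (n:ℝ) * (4 * ε) := by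
    rw [← div_le_iff₀ (by positivity)]; exact hn4
  have h1n : (1:ℝ) ≤ 4 * ε * n := by nlinarith
  have hr5 : 1 - 5 * ε ≤ r := by
    rw [hr, le_div_iff₀ hnposR, hrcast]
    nlinarith
  have hexp : Real.exp (-(8*ε)) ≤ 1 - 5 * ε := by
    have h8 : 8 * ε + 1 ≤ Real.exp (8*ε) := Real.add_one_le_exp _
    have hprod : Real.exp (-(8*ε)) * Real.exp (8*ε) = 1 := by
      rw [← Real.exp_add]; norm_num
    nlinarith [Real.exp_pos (-(8*ε)), Real.exp_pos (8*ε),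
      mul_le_mul_of_nonneg_left h8 (le_of_lt (Real.exp_pos (-(8*ε))))]
  have hlg : Real.log δ ≤ (-(8*ε)) * m := by
    have h8m : (m:ℝ) * (8 * ε) ≤ Real.log (1/δ) := by
      rw [← le_div_iff₀ (by positivity)]; exact hcb
    rw [one_div, Real.log_inv] at h8m
    nlinarith
  calc δ = Real.exp (Real.log δ) := (Real.exp_log hδ).symm
    _ ≤ Real.exp ((-(8*ε)) * m) := Real.exp_le_exp.mpr hlg
    _ = (Real.exp (-(8*ε))) ^ m := by
        rw [mul_comm, ← Real.exp_nat_mul]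
    _ ≤ (1 - 5 * ε) ^ m := pow_le_pow_left₀ (le_of_lt (Real.exp_pos _)) hexp m
    _ ≤ r ^ m := pow_le_pow_left₀ (by nlinarith) hr5 m

lemma ennA (n m c : ℕ) (δ : ℝ) (hδ' : δ ≤ 1/2) (hnpos : 0 < n) (hfin : n ^ m ≤ 2 * c) :
    ENNReal.ofReal δ ≤ ((n:ℝ≥0∞) ^ m)⁻¹ * (c : ℝ≥0∞) := by
  calc ENNReal.ofReal δ ≤ ENNReal.ofReal (1/2) := ENNReal.ofReal_le_ofReal hδ'
    _ = 2⁻¹ := by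
        rw [one_div, ENNReal.ofReal_inv_of_pos (by norm_num)]
        norm_num
    _ ≤ ((n:ℝ≥0∞) ^ m)⁻¹ * (c : ℝ≥0∞) := by
        rw [← ENNReal.div_eq_inv_mul, ENNReal.le_div_iff_mul_le
          (Or.inl (pow_ne_zero m (by exact_mod_cast hnpos.ne')))
          (Or.inl (ENNReal.pow_ne_top (ENNReal.natCast_ne_top n)))]
        have hcast2 : ((n:ℝ≥0∞)) ^ m ≤ 2 * (c : ℝ≥0∞) := by
          calc ((n:ℝ≥0∞)) ^ m = ((n ^ m : ℕ) : ℝ≥0∞) := by push_cast; ring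
            _ ≤ ((2 * c : ℕ) : ℝ≥0∞) := by exact_mod_cast hfin
            _ = 2 * (c : ℝ≥0∞) := by push_cast; ring
        calc 2⁻¹ * (n:ℝ≥0∞) ^ m ≤ 2⁻¹ * (2 * (c : ℝ≥0∞)) := mul_le_mul_right hcast2 _
          _ = (c : ℝ≥0∞) := by
              rw [← mul_assoc, ENNReal.inv_mul_cancel (by norm_num) (by norm_num), one_mul]

set_option maxHeartbeats 2000000 in
/-- For the first Cantor class with parameter `d` on `X = [⌈d/(4ε)⌉]`, the
all-`*` target and the uniform marginal, if `m ≤ max (d/(16ε), ln(1/δ)/(8ε))` then with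
probability at least `δ` over `S ~ D^m` there is a set `B ⊆ [d]` of mass more than `ε` such
that on every point of `B`, the bad ERM trained on *any* sub-training sequence of `S` outputs
a non-`*` label; consequently every majority-vote classifier of finitely many such bad-ERM
outputs has `D`-error greater than `ε`. -/
theorem majority_of_bad_erm_lower_bound
    (d : ℕ) (hd : 1 ≤ d) (ε δ : ℝ) (hε : 0 < ε) (hε' : ε ≤ 1 / 100)
    (hδ : 0 < δ) (hδ' : δ ≤ 1 / 2)
    (n : ℕ) (hn : n = ⌈(d : ℝ) / (4 * ε)⌉₊)
    (m : ℕ) (hm : 0 < m)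
    (hm' : (m : ℝ) ≤ max ((d : ℝ) / (16 * ε)) (Real.log (1 / δ) / (8 * ε))) :
    ENNReal.ofReal δ ≤
      (Measure.pi fun _ : Fin m => cantorD n)
        {S : Fin m → Fin n × Option (Finset (Fin n)) |
          ∃ B : Finset (Fin n),
            (∀ x ∈ B, (x : ℕ) < d) ∧
            ε * n < (B.card : ℝ) ∧
            (∀ x ∈ B, ∀ S' : List (Fin n × Option (Finset (Fin n))),
              (∀ p ∈ S', p ∈ List.ofFn S) → Abad d S' x ≠ none) ∧
            (∀ k : ℕ, 1 ≤ k →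
              ∀ Ss : Fin k → List (Fin n × Option (Finset (Fin n))),
                (∀ i, ∀ p ∈ Ss i, p ∈ List.ofFn S) →
                ∀ g : Fin n → Option (Option (Finset (Fin n))),
                  IsMajVote (List.ofFn fun i => Abad d (Ss i)) g →
                  ENNReal.ofReal ε <
                    cantorD n {p : Fin n × Option (Finset (Fin n)) | g p.1 ≠ some p.2})} := by
  classical
  -- basic numeric facts
  have hεd : (0:ℝ) < (d:ℝ) / (4 * ε) := by positivity
  have hn4 : (d : ℝ) / (4 * ε) ≤ n := by rw [hn]; exact Nat.le_ceil _
  have hnlt : (n : ℝ) < (d : ℝ) / (4 * ε) + 1 := by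
    rw [hn]; exact Nat.ceil_lt_add_one (le_of_lt hεd)
  have hd1 : (1:ℝ) ≤ (d:ℝ) := by exact_mod_cast hd
  have hεn_lb : (d:ℝ) / 4 ≤ ε * n := by
    have := mul_le_mul_of_nonneg_left hn4 (le_of_lt hε)
    calc (d:ℝ)/4 = ε * ((d:ℝ)/(4*ε)) := by field_simp
      _ ≤ ε * n := this
  have hεn_ub : ε * n < (d:ℝ)/4 + ε := by
    have := mul_lt_mul_of_pos_left hnlt hε
    calc ε * n < ε * ((d:ℝ)/(4*ε) + 1) := this
      _ = (d:ℝ)/4 + ε := by field_simp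
  have hdn : (d:ℝ) < (n:ℝ) := by
    have h25 : (25:ℝ) * d ≤ (d:ℝ)/(4*ε) := by
      rw [le_div_iff₀ (by positivity)]
      nlinarith
    nlinarith
  have hdnN : d < n := by exact_mod_cast hdn
  have hnpos : 0 < n := lt_trans (by omega) hdnN
  have hnposR : (0:ℝ) < n := by exact_mod_cast hnpos
  set t := ⌊ε * (n:ℝ)⌋₊ with ht
  have htle : (t:ℝ) ≤ ε * n := Nat.floor_le (by positivity)
  have htdR : (t:ℝ) < (d:ℝ) := by nlinarith
  have htd : t < d := by exact_mod_cast htdR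
  have ht1n : t + 1 < n := by omega
  -- the set of "good" feature vectors
  set Bv : (Fin m → Fin n) → Finset (Fin n) :=
    fun v => Finset.univ.filter (fun x => (x:ℕ) < d ∧ ∀ i, v i ≠ x) with hBv
  set E : Set (Fin m → Fin n) := {v | t + 1 ≤ (Bv v).card} with hE
  -- rewrite the pi measure through the deterministic labelling map
  rw [pi_cantorD_eq]
  rw [Measure.map_apply Measurable.of_discrete MeasurableSet.of_discrete]
  refine le_trans (?_ : ENNReal.ofReal δ ≤ (Measure.pi fun _ : Fin m => uniformFin n) E)
    (measure_mono ?_)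
  -- Part 2 : the inclusion E ⊆ Φ⁻¹(target)
  case refine_2 =>
    intro v hv
    simp only [Set.mem_preimage, Set.mem_setOf_eq]
    have hvE : t + 1 ≤ (Bv v).card := hv
    have hunseen : ∀ x ∈ Bv v, ∀ S' : List (Fin n × Option (Finset (Fin n))),
        (∀ p ∈ S', p ∈ List.ofFn (fun i => ((v i), (none : Option (Finset (Fin n)))))) →
        Abad d S' x ≠ none := by
      intro x hx S' hsub
      rw [hBv, Finset.mem_filter] at hx
      obtain ⟨-, hxd, hxun⟩ := hx
      have hxu : x ∈ unseenSet S' := by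
        rw [unseenSet, Finset.mem_filter]
        refine ⟨Finset.mem_univ _, fun p hp => ?_⟩
        have := hsub p hp
        rw [List.mem_ofFn] at this
        obtain ⟨i, hi⟩ := this
        rw [← hi]
        exact hxun i
      have hmem := mem_badSet S' x hxu hxd
      simp [Abad, cantorHyp, hmem]
    refine ⟨Bv v, ?_, ?_, hunseen, ?_⟩
    · intro x hx; rw [hBv, Finset.mem_filter] at hx; exact hx.2.1
    · exact (Nat.floor_lt (by positivity)).mp (by omega)
    · intro k hk Ss hsub g hmaj
      have hne : ∀ x ∈ Bv v, g x ≠ some none := by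
        intro x hx
        have hAll : ∀ f ∈ (List.ofFn fun i => Abad d (Ss i)), f x ≠ none := by
          intro f hf
          rw [List.mem_ofFn] at hf
          obtain ⟨i, rfl⟩ := hf
          exact hunseen x hx (Ss i) (hsub i)
        by_cases hex : ∃ y, StrictMode (List.ofFn fun i => Abad d (Ss i)) x y
        · obtain ⟨y, hy⟩ := hex
          have hgy := (hmaj x).1 y hy
          rw [hgy]
          intro hc
          have hyn : y = none := by injection hc
          subst hyn
          have h2 := hy (some ∅) (by simp)
          exact Nat.not_lt_zero _ (lt_of_lt_of_le h2 (le_of_eq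
            (List.countP_eq_zero.mpr (fun f hf => by simpa using hAll f hf))))
        · rcases (hmaj x).2 hex with h | ⟨f, hf, hgf⟩
          · rw [h]; simp
          · rw [hgf]
            intro hc
            have : f x = none := by injection hc
            exact hAll f hf this
      -- error of the majority vote is at least the mass of Bv v
      have hmeas : cantorD n {p : Fin n × Option (Finset (Fin n)) | g p.1 ≠ some p.2}
          = uniformFin n {x : Fin n | g x ≠ some none} := by
        rw [cantorD, Measure.map_apply Measurable.of_discrete MeasurableSet.of_discrete]
        rfl
      rw [hmeas]
      have hsub2 : (↑(Bv v) : Set (Fin n)) ⊆ {x : Fin n | g x ≠ some none} := by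
        intro x hx
        exact hne x (by exact_mod_cast hx)
      refine lt_of_lt_of_le ?_ (measure_mono hsub2)
      have huB : uniformFin n (↑(Bv v) : Set (Fin n)) = ((n:ℝ≥0∞))⁻¹ * ((Bv v).card : ℝ≥0∞) := by
        rw [uniformFin_apply]
        congr 2
        simp
      rw [huB]
      have hεcard : ε * n < ((Bv v).card : ℝ) :=
        (Nat.floor_lt (by positivity)).mp (by omega)
      have hcardpos : (0:ℝ) < ((Bv v).card : ℝ) := by nlinarith
      rw [← ENNReal.div_eq_inv_mul,
        ENNReal.lt_div_iff_mul_lt (Or.inl (by exact_mod_cast hnpos.ne')) (Or.inl (by simp)),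
        ← ENNReal.ofReal_natCast n, ← ENNReal.ofReal_natCast ((Bv v).card),
        ← ENNReal.ofReal_mul (le_of_lt hε),
        ENNReal.ofReal_lt_ofReal_iff hcardpos]
      exact hεcard
  -- Part 1 : probability lower bound
  rcases le_max_iff.mp hm' with hca | hcb
  · -- Case A : m ≤ d/(16 ε)
    rw [pi_uniform_eq, Measure.smul_apply, smul_eq_mul]
    have hEcoe : E = ↑(Finset.univ.filter (fun v : Fin m → Fin n => t + 1 ≤ (Bv v).card)) := by
      ext v; simp [hE]
    rw [hEcoe, Measure.count_apply_finset]
    have hnum : 2 * d * m ≤ (d - t) * n :=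
      numA d m n t ε hε hε' hd1 htle hεn_ub htd hca hn4
    have hcardU : (Finset.univ : Finset (Fin m → Fin n)).card = n ^ m := by
      simp [Finset.card_univ]
    set EF := Finset.univ.filter (fun v : Fin m → Fin n => t + 1 ≤ (Bv v).card) with hEF
    set Eb := Finset.univ.filter (fun v : Fin m → Fin n => ¬ (t + 1 ≤ (Bv v).card)) with hEb
    have hsplitc : EF.card + Eb.card = n ^ m := by
      rw [hEF, hEb, Finset.card_filter_add_card_filter_not, hcardU]
    have hdcard : (Finset.univ.filter (fun x : Fin n => (x:ℕ) < d)).card = d := by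
      have he : Finset.univ.filter (fun x : Fin n => (x:ℕ) < d)
          = Finset.Iio (⟨d, hdnN⟩ : Fin n) := by
        ext y; simp [Fin.lt_def]
      rw [he, Fin.card_Iio]
    have hpart : ∀ v : Fin m → Fin n, (Bv v).card +
        (Finset.univ.filter (fun x : Fin n => (x:ℕ) < d ∧ ¬ ∀ i, v i ≠ x)).card = d := by
      intro v
      have e1 : Finset.univ.filter (fun x : Fin n => (x:ℕ) < d ∧ ∀ i, v i ≠ x)
          = (Finset.univ.filter (fun x : Fin n => (x:ℕ) < d)).filter (fun x => ∀ i, v i ≠ x) := by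
        rw [Finset.filter_filter]
      have e2 : Finset.univ.filter (fun x : Fin n => (x:ℕ) < d ∧ ¬ ∀ i, v i ≠ x)
          = (Finset.univ.filter (fun x : Fin n => (x:ℕ) < d)).filter (fun x => ¬ ∀ i, v i ≠ x) := by
        rw [Finset.filter_filter]
      rw [hBv]
      simp only []
      rw [e1, e2, Finset.card_filter_add_card_filter_not, hdcard]
    have hseen : ∀ x : Fin n,
        (Finset.univ.filter (fun v : Fin m → Fin n => ¬ ∀ i, v i ≠ x)).card
          = n ^ m - (n-1) ^ m := by
      intro x
      have h1 : (Finset.univ.filter (fun v : Fin m → Fin n => ∀ i, v i ≠ x)).card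
          = (n-1) ^ m := by
        have he : Finset.univ.filter (fun v : Fin m → Fin n => ∀ i, v i ≠ x)
            = Fintype.piFinset (fun _ : Fin m => ({x}ᶜ : Finset (Fin n))) := by
          ext v; simp [Fintype.mem_piFinset]
        rw [he, Fintype.card_piFinset]
        simp [Finset.card_compl]
      have h2 := Finset.card_filter_add_card_filter_not
        (s := (Finset.univ : Finset (Fin m → Fin n))) (p := fun v => ∀ i, v i ≠ x)
      rw [hcardU, h1] at h2
      rw [← h2, Nat.add_sub_cancel_left]
    have hsum : ∑ v : Fin m → Fin n,
        (Finset.univ.filter (fun x : Fin n => (x:ℕ) < d ∧ ¬ ∀ i, v i ≠ x)).card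
          ≤ d * (m * n ^ (m-1)) := by
      have inner : ∀ x : Fin n, (∑ v : Fin m → Fin n,
          if (x:ℕ) < d ∧ ¬ ∀ i, v i ≠ x then 1 else 0)
            = if (x:ℕ) < d then n ^ m - (n-1) ^ m else 0 := by
        intro x
        by_cases hxd : (x:ℕ) < d
        · simp only [hxd, true_and, if_true]
          rw [← hseen x, Finset.card_filter]
        · simp [hxd]
      calc ∑ v : Fin m → Fin n,
            (Finset.univ.filter (fun x : Fin n => (x:ℕ) < d ∧ ¬ ∀ i, v i ≠ x)).card
          = ∑ v : Fin m → Fin n, ∑ x : Fin n,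
              if (x:ℕ) < d ∧ ¬ ∀ i, v i ≠ x then 1 else 0 := by
            refine Finset.sum_congr rfl fun v _ => ?_
            rw [Finset.card_filter]
        _ = ∑ x : Fin n, ∑ v : Fin m → Fin n,
              if (x:ℕ) < d ∧ ¬ ∀ i, v i ≠ x then 1 else 0 := Finset.sum_comm
        _ = ∑ x : Fin n, if (x:ℕ) < d then n ^ m - (n-1) ^ m else 0 := by
            exact Finset.sum_congr rfl fun x _ => inner x
        _ = ∑ x ∈ Finset.univ.filter (fun x : Fin n => (x:ℕ) < d), (n ^ m - (n-1) ^ m) := by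
            rw [Finset.sum_filter]
        _ = d * (n ^ m - (n-1) ^ m) := by
            rw [Finset.sum_const, hdcard, smul_eq_mul]
        _ ≤ d * (m * n ^ (m-1)) := Nat.mul_le_mul_left d (nat_sub_pow_le n m)
    have hmarkov : (d - t) * Eb.card ≤ ∑ v : Fin m → Fin n,
        (Finset.univ.filter (fun x : Fin n => (x:ℕ) < d ∧ ¬ ∀ i, v i ≠ x)).card := by
      have hlb : ∀ v ∈ Eb, d - t ≤
          (Finset.univ.filter (fun x : Fin n => (x:ℕ) < d ∧ ¬ ∀ i, v i ≠ x)).card := by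
        intro v hv
        rw [hEb, Finset.mem_filter] at hv
        exact arith_markov t d _ _ hv.2 (hpart v)
      calc (d - t) * Eb.card = ∑ _v ∈ Eb, (d - t) := by
            rw [Finset.sum_const, smul_eq_mul, mul_comm]
        _ ≤ ∑ v ∈ Eb, (Finset.univ.filter
              (fun x : Fin n => (x:ℕ) < d ∧ ¬ ∀ i, v i ≠ x)).card := Finset.sum_le_sum hlb
        _ ≤ ∑ v : Fin m → Fin n, (Finset.univ.filter
              (fun x : Fin n => (x:ℕ) < d ∧ ¬ ∀ i, v i ≠ x)).card :=
            Finset.sum_le_sum_of_subset (Finset.subset_univ _)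
    have h2Eb : 2 * Eb.card ≤ n ^ m := by
      have hmpow : n * n ^ (m - 1) = n ^ m := pow_pred_mul n m hm
      have hchain : (d - t) * (2 * Eb.card) ≤ (d - t) * n ^ m := by
        calc (d - t) * (2 * Eb.card) = 2 * ((d - t) * Eb.card) := by ring
          _ ≤ 2 * (d * (m * n ^ (m-1))) :=
              Nat.mul_le_mul_left 2 (le_trans hmarkov hsum)
          _ = (2 * d * m) * n ^ (m-1) := by ring
          _ ≤ ((d - t) * n) * n ^ (m-1) := Nat.mul_le_mul_right _ hnum
          _ = (d - t) * (n * n ^ (m-1)) := by ring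
          _ = (d - t) * n ^ m := by rw [hmpow]
      exact Nat.le_of_mul_le_mul_left hchain (Nat.sub_pos_of_lt htd)
    have hfin : n ^ m ≤ 2 * EF.card := arith_split _ _ _ hsplitc h2Eb
    exact ennA n m EF.card δ hδ' hnpos hfin
  · -- Case B : m ≤ log(1/δ)/(8 ε)
    have hsubE' : Set.univ.pi (fun _ : Fin m => {x : Fin n | t + 1 ≤ (x:ℕ)}) ⊆ E := by
      intro v hv
      rw [hE]
      show t + 1 ≤ (Bv v).card
      have hIio : Finset.Iio (⟨t+1, ht1n⟩ : Fin n) ⊆ Bv v := by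
        intro x hx
        rw [Finset.mem_Iio, Fin.lt_def] at hx
        rw [hBv, Finset.mem_filter]
        refine ⟨Finset.mem_univ _, Nat.lt_of_lt_of_le hx (Nat.succ_le_of_lt htd), fun i => ?_⟩
        have hvi : t + 1 ≤ ((v i : Fin n) : ℕ) := hv i (Set.mem_univ i)
        intro hcon
        rw [hcon] at hvi
        exact Nat.lt_irrefl _ (Nat.lt_of_lt_of_le hx hvi)
      have hci : (Finset.Iio (⟨t+1, ht1n⟩ : Fin n)).card = t + 1 := by
        rw [Fin.card_Iio]
      calc t + 1 = (Finset.Iio (⟨t+1, ht1n⟩ : Fin n)).card := hci.symm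
        _ ≤ (Bv v).card := Finset.card_le_card hIio
    refine le_trans ?_ (measure_mono hsubE')
    rw [Measure.pi_pi]
    have hsetE : {x : Fin n | t + 1 ≤ (x:ℕ)} = ↑((Finset.Iio (⟨t+1, ht1n⟩ : Fin n))ᶜ) := by
      ext y
      simp [Fin.lt_def, Fin.le_def, not_lt]
    have happ : uniformFin n {x : Fin n | t + 1 ≤ (x:ℕ)}
        = ((n:ℝ≥0∞))⁻¹ * ((n - (t+1) : ℕ) : ℝ≥0∞) := by
      rw [hsetE, uniformFin, Measure.smul_apply, smul_eq_mul, Measure.count_apply_finset]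
      congr 2
      rw [Finset.card_compl, Fin.card_Iio, Fintype.card_fin]
    have hV : ((n:ℝ≥0∞))⁻¹ * ((n - (t+1) : ℕ) : ℝ≥0∞)
        = ENNReal.ofReal (((n - (t+1) : ℕ) : ℝ) / n) := by
      rw [ENNReal.ofReal_div_of_pos hnposR, ENNReal.ofReal_natCast, ENNReal.ofReal_natCast,
        ENNReal.div_eq_inv_mul]
    calc ENNReal.ofReal δ
        ≤ ENNReal.ofReal ((((n - (t+1) : ℕ) : ℝ) / n) ^ m) :=
          ENNReal.ofReal_le_ofReal (numB d m n t ε δ hε hε' hδ hd1 htle ht1n hnposR hcb hn4)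
      _ = (ENNReal.ofReal (((n - (t+1) : ℕ) : ℝ) / n)) ^ m :=
          ENNReal.ofReal_pow (by positivity) m
      _ = ∏ _i : Fin m, ENNReal.ofReal (((n - (t+1) : ℕ) : ℝ) / n) := by
          rw [Finset.prod_const, Finset.card_univ, Fintype.card_fin]
      _ = ∏ _i : Fin m, uniformFin n {x : Fin n | t + 1 ≤ (x:ℕ)} :=
          Finset.prod_congr rfl (fun _ _ => (happ.trans hV).symm)
end

section
/- There exist countably infinite sets X and Y and a hypothesis class H ⊆ Y^X with DS dimension equal to 1 such that for every learner A : (X×Y)* → Y^X with finite properness number prop_H(A) < ∞ and every sample size m ∈ ℕ, there exists an H-realizable distribution D on X×Y with E_{S~D^m}[L_D(A(S))] ≥ 1/2. In particular, any learner for H achieving expected error strictly below 1/2 (and a fortiori any PAC learner for H) must have prop_H(A) = ∞. -/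
/-!
Read a point `x : ℕ` as the cell `(row, column) = Nat.unpair x`. The class `hypClass` consists of
the hypotheses `hypOf T` for `T` the graph of a finite partial function from rows to columns:
`hypOf T` vanishes on `T` and takes a value coding `T` elsewhere. A nonzero value therefore
determines the whole hypothesis, which rules out DS-shattering two points, while the point `0` is
shattered by `hypOf {0}` and `hypOf ∅`.

A hypothesis vanishes at most once in each row, so a function covered pointwise by `p` hypotheses
vanishes at most `p` times in each row. Take `k = 4(m+1)` rows and `n = 4(p+1)` columns, and for
`b : Fin k → Fin n` let `D_b` be uniform on the cells `(i, b i)`, all labelled `0`. A sample of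
size `m` misses at least `k - m` rows; on a missed row `i` the learner's output does not depend on
`b i`, so for at least `n - p` of the `n` values of `b i` it errs at `(i, b i)`. Averaged over `b`,
the expected error is at least `(k - m)(n - p) / (k n) ≥ 9/16`, so some `D_b` is hard.
-/

open MeasureTheory ENNReal
open scoped Classical

/-- `H` DS-shatters the tuple of (distinct) points `xs`. -/
def DSShatters {X Y : Type*} (H : Set (X → Y)) {d : ℕ} (xs : Fin d → X) : Prop :=
  Function.Injective xs ∧
    ∃ F : Finset (X → Y), ↑F ⊆ H ∧ F.Nonempty ∧
      ∀ h ∈ F, ∀ i : Fin d, ∃ g ∈ F,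
        g (xs i) ≠ h (xs i) ∧ ∀ j : Fin d, j ≠ i → g (xs j) = h (xs j)

/-- A finite training sequence is `H`-realizable. -/
def RealizableSeq {X Y : Type*} (H : Set (X → Y)) (S : List (X × Y)) : Prop :=
  ∃ h ∈ H, ∀ p ∈ S, h p.1 = p.2

/-- A distribution `D` on `X × Y` is `H`-realizable. -/
def RealizableDist {X Y : Type*} [MeasurableSpace X] [MeasurableSpace Y]
    (H : Set (X → Y)) (D : Measure (X × Y)) : Prop :=
  ∀ m : ℕ, (Measure.pi fun _ : Fin m => D)
    {S : Fin m → X × Y | ∃ h ∈ H, ∀ i, h (S i).1 = (S i).2} = 1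

/-- `prop_H(f) ≤ p`: some finite `H' ⊆ H` of cardinality at most `p` covers every value of
`f` pointwise. -/
def PropLe {X Y : Type*} (H : Set (X → Y)) (f : X → Y) (p : ℕ) : Prop :=
  ∃ H' : Finset (X → Y), ↑H' ⊆ H ∧ H'.card ≤ p ∧ ∀ x : X, ∃ h ∈ H', f x = h x

open Finset

lemma realizableDist_of_measure_eq_one {X Y : Type*} [MeasurableSpace X] [MeasurableSpace Y]
    {H : Set (X → Y)} {D : Measure (X × Y)} [IsProbabilityMeasure D] {h : X → Y} (hH : h ∈ H)
    (hD : D {q | h q.1 = q.2} = 1) : RealizableDist H D := by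
  intro m
  have hsub : Set.univ.pi (fun _ : Fin m => {q : X × Y | h q.1 = q.2}) ⊆
      {S | ∃ h ∈ H, ∀ i, h (S i).1 = (S i).2} :=
    fun S hS => ⟨h, hH, fun i => hS i (Set.mem_univ i)⟩
  refine le_antisymm prob_le_one ?_
  simpa [Measure.pi_pi, hD] using measure_mono (μ := Measure.pi fun _ => D) hsub

noncomputable section

namespace NoFiniteProperness

def hypOf (T : Finset ℕ) (x : ℕ) : ℕ := if x ∈ T then 0 else Encodable.encode T + 1

def IsPartialGraph (T : Finset ℕ) : Prop :=
  ∀ x ∈ T, ∀ y ∈ T, (Nat.unpair x).1 = (Nat.unpair y).1 → x = y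

def hypClass : Set (ℕ → ℕ) := {h | ∃ T, IsPartialGraph T ∧ h = hypOf T}

lemma hypOf_eq_zero_iff {T : Finset ℕ} {x : ℕ} : hypOf T x = 0 ↔ x ∈ T := by
  unfold hypOf; split_ifs <;> simp_all

lemma eq_of_hypOf_apply_eq {T T' : Finset ℕ} {x : ℕ} (h : hypOf T x = hypOf T' x)
    (h0 : hypOf T x ≠ 0) : T = T' := by
  have hx : x ∉ T := mt hypOf_eq_zero_iff.2 h0
  have hx' : x ∉ T' := mt hypOf_eq_zero_iff.2 (h ▸ h0)
  simp only [hypOf, hx, hx', if_false, Nat.add_right_cancel_iff] at h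
  exact Encodable.encode_injective h

lemma exists_dsShatters_one : ∃ xs : Fin 1 → ℕ, DSShatters hypClass xs := by
  have hne : hypOf {0} 0 ≠ hypOf ∅ 0 := by simp [hypOf]
  have hvac (i : Fin 1) (P : Fin 1 → Prop) : ∀ j, j ≠ i → P j :=
    fun j hj => absurd (Subsingleton.elim j i) hj
  refine ⟨fun _ => 0, fun a b _ => Subsingleton.elim a b, {hypOf {0}, hypOf ∅}, ?_,
    insert_nonempty _ _, ?_⟩
  · simp only [coe_insert, coe_singleton, Set.insert_subset_iff, Set.singleton_subset_iff]
    exact ⟨⟨{0}, by simp [IsPartialGraph], rfl⟩, ⟨∅, by simp [IsPartialGraph], rfl⟩⟩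
  · intro h hh i
    rcases mem_insert.1 hh with rfl | hh
    · exact ⟨hypOf ∅, by simp, hne.symm, hvac i _⟩
    · rw [mem_singleton.1 hh]
      exact ⟨hypOf {0}, by simp, hne, hvac i _⟩

lemma not_dsShatters_two (xs : Fin 2 → ℕ) : ¬ DSShatters hypClass xs := by
  rintro ⟨-, F, hF, ⟨h₀, hh₀⟩, hflip⟩
  have hzero : ∀ h ∈ F, h (xs 0) = 0 := by
    intro h hh
    by_contra hne
    obtain ⟨g, hg, hgh, hagree⟩ := hflip h hh 1
    obtain ⟨T, -, rfl⟩ := hF hh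
    obtain ⟨T', -, rfl⟩ := hF hg
    have h0 := hagree 0 (by decide)
    exact hgh (by rw [eq_of_hypOf_apply_eq h0 (h0 ▸ hne)])
  obtain ⟨g, hg, hgh, -⟩ := hflip h₀ hh₀ 0
  exact hgh (by rw [hzero g hg, hzero h₀ hh₀])

section Targets

variable {k n : ℕ}

def rowPoint (b : Fin k → Fin n) (i : Fin k) : ℕ × ℕ := (Nat.pair i (b i), 0)

def rowGraph (b : Fin k → Fin n) : Finset ℕ := univ.image fun i : Fin k => Nat.pair i (b i)

lemma rowPoint_injective (b : Fin k → Fin n) : Function.Injective (rowPoint b) := by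
  intro i j h
  exact Fin.ext (by simpa [rowPoint] using congrArg (fun q => (Nat.unpair q.1).1) h)

lemma isPartialGraph_rowGraph (b : Fin k → Fin n) : IsPartialGraph (rowGraph b) := by
  simp only [IsPartialGraph, rowGraph, mem_image, mem_univ, true_and]
  rintro _ ⟨i, rfl⟩ _ ⟨j, rfl⟩ hij
  simp only [Nat.unpair_pair] at hij
  rw [Fin.ext hij]

lemma hypOf_rowGraph_rowPoint (b : Fin k → Fin n) (i : Fin k) :
    hypOf (rowGraph b) (rowPoint b i).1 = (rowPoint b i).2 :=
  hypOf_eq_zero_iff.2 (mem_image_of_mem _ (mem_univ i))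

def rowSample {m : ℕ} (b : Fin k → Fin n) (v : Fin m → Fin k) : List (ℕ × ℕ) :=
  List.ofFn fun t => rowPoint b (v t)

lemma realizableSeq_rowSample {m : ℕ} (b : Fin k → Fin n) (v : Fin m → Fin k) :
    RealizableSeq hypClass (rowSample b v) := by
  refine ⟨hypOf (rowGraph b), ⟨_, isPartialGraph_rowGraph b, rfl⟩, ?_⟩
  simp only [rowSample, List.forall_mem_ofFn_iff]
  exact fun t => hypOf_rowGraph_rowPoint b (v t)

def errorCount (f : ℕ → ℕ) (b : Fin k → Fin n) : ℕ := #{i : Fin k | f (Nat.pair i (b i)) ≠ 0}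

variable [NeZero k]

def targetDist (b : Fin k → Fin n) : Measure (ℕ × ℕ) :=
  ((PMF.uniformOfFintype (Fin k)).map (rowPoint b)).toMeasure

lemma targetDist_apply (b : Fin k → Fin n) (s : Set (ℕ × ℕ)) :
    targetDist b s = #{i | rowPoint b i ∈ s} / k := by
  rw [targetDist, PMF.toMeasure_map_apply _ _ _ (measurable_of_countable _) .of_discrete,
    PMF.toMeasure_uniformOfFintype_apply _ .of_discrete, Fintype.card_fin, Fintype.card_subtype]
  rfl

instance (b : Fin k → Fin n) : IsProbabilityMeasure (targetDist b) := by
  unfold targetDist; infer_instance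

lemma targetDist_rowPoint (b : Fin k → Fin n) (i : Fin k) :
    targetDist b {rowPoint b i} = (k : ℝ≥0∞)⁻¹ := by
  simp [targetDist_apply, (rowPoint_injective b).eq_iff, filter_eq']

lemma realizableDist_targetDist (b : Fin k → Fin n) : RealizableDist hypClass (targetDist b) := by
  refine realizableDist_of_measure_eq_one ⟨_, isPartialGraph_rowGraph b, rfl⟩ ?_
  simp only [targetDist_apply, Set.mem_ofPred_eq, hypOf_rowGraph_rowPoint, filter_true, card_univ,
    Fintype.card_fin]
  exact ENNReal.div_self (by simp [NeZero.ne k]) (natCast_ne_top k)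

lemma targetDist_error (f : ℕ → ℕ) (b : Fin k → Fin n) :
    targetDist b {q | f q.1 ≠ q.2} = errorCount f b / k := by
  rw [targetDist_apply, errorCount]
  -- the two filters differ only in their decidability instances
  congr

lemma lintegral_targetDist_error_ge {m : ℕ} (A : List (ℕ × ℕ) → ℕ → ℕ) (b : Fin k → Fin n) :
    ∑ v : Fin m → Fin k, (errorCount (A (rowSample b v)) b / k * (k : ℝ≥0∞)⁻¹ ^ m) ≤
      ∫⁻ S : Fin m → ℕ × ℕ, targetDist b {q | A (List.ofFn S) q.1 ≠ q.2}
        ∂(Measure.pi fun _ => targetDist b) := by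
  have hpi (v : Fin m → Fin k) :
      Measure.pi (fun _ => targetDist b) {fun t => rowPoint b (v t)} = (k : ℝ≥0∞)⁻¹ ^ m := by
    simp [← Set.univ_pi_singleton, Measure.pi_pi, targetDist_rowPoint]
  have hinj : Function.Injective fun (v : Fin m → Fin k) t => rowPoint b (v t) :=
    fun v w h => funext fun t => rowPoint_injective b (congrFun h t)
  rw [lintegral_countable', ← tsum_fintype (L := .unconditional _)]
  refine le_of_eq_of_le (tsum_congr fun v => ?_)
    (ENNReal.tsum_comp_le_tsum_of_injective hinj fun S : Fin m → ℕ × ℕ =>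
      targetDist b {q | A (List.ofFn S) q.1 ≠ q.2} * Measure.pi (fun _ => targetDist b) {S})
  rw [hpi, targetDist_error]
  rfl

end Targets

section Counting

variable {k n p : ℕ}

lemma card_filter_apply_pair_eq_zero_le {f : ℕ → ℕ} (hf : PropLe hypClass f p) (i : ℕ) :
    #{c : Fin n | f (Nat.pair i c) = 0} ≤ p := by
  obtain ⟨H', hH', hcard, hcover⟩ := hf
  choose g hgH' hg using fun c : Fin n => hcover (Nat.pair i c)
  refine (card_le_card_of_injOn g (fun c _ => hgH' c) ?_).trans hcard
  intro c hc c' hc' hcc'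
  simp only [coe_filter, mem_univ, true_and, Set.mem_ofPred_eq] at hc hc'
  obtain ⟨T, hT, hgT⟩ := hH' (hgH' c)
  have hmem (c'' : Fin n) (hgc : g c'' = hypOf T) (h0 : f (Nat.pair i c'') = 0) :
      Nat.pair i c'' ∈ T :=
    hypOf_eq_zero_iff.1 (hgc ▸ hg c'' ▸ h0)
  have hpair := hT _ (hmem c hgT hc) _ (hmem c' (hcc' ▸ hgT) hc') (by simp)
  exact Fin.ext (by simpa using congrArg (fun x => (Nat.unpair x).2) hpair)

lemma le_card_filter_ne_zero (i : Fin k) (g : (Fin k → Fin n) → ℕ → ℕ)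
    (hg : ∀ b b', (∀ j ≠ i, b j = b' j) → g b = g b') (hp : ∀ b, PropLe hypClass (g b) p) :
    n ^ (k - 1) * (n - p) ≤ #{b : Fin k → Fin n | g b (Nat.pair i (b i)) ≠ 0} := by
  rcases Nat.eq_zero_or_pos n with rfl | hn
  · simp
  set e := Equiv.funSplitAt i (Fin n)
  set c₀ : Fin n := ⟨0, hn⟩
  have hcard : Fintype.card ({j // j ≠ i} → Fin n) = n ^ (k - 1) := by
    simp [Fintype.card_subtype_compl]
  -- `e.symm (c, r)` varies with `c` only at `i`, where `g` cannot see it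
  have hfiber (c : Fin n) (r : {j // j ≠ i} → Fin n) :
      g (e.symm (c, r)) (Nat.pair i (e.symm (c, r) i)) = g (e.symm (c₀, r)) (Nat.pair i c) := by
    rw [hg _ (e.symm (c₀, r)) fun j hj => by simp [e, Equiv.funSplitAt_symm_apply, hj]]
    simp [e, Equiv.funSplitAt_symm_apply]
  have hcol (r : {j // j ≠ i} → Fin n) :
      n - p ≤ #{c : Fin n | g (e.symm (c₀, r)) (Nat.pair i c) ≠ 0} := by
    have hzero := card_filter_apply_pair_eq_zero_le (n := n) (hp (e.symm (c₀, r))) i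
    have hsplit := card_filter_add_card_filter_not (s := univ)
      (fun c : Fin n => g (e.symm (c₀, r)) (Nat.pair i c) ≠ 0)
    simp only [card_univ, Fintype.card_fin, not_not] at hsplit
    omega
  calc n ^ (k - 1) * (n - p) = ∑ _r : {j // j ≠ i} → Fin n, (n - p) := by simp [hcard]
    _ ≤ ∑ r, #{c : Fin n | g (e.symm (c₀, r)) (Nat.pair i c) ≠ 0} := sum_le_sum fun r _ => hcol r
    _ = #{b : Fin k → Fin n | g b (Nat.pair i (b i)) ≠ 0} := by
      simp only [card_filter, ← hfiber]
      rw [← Fintype.sum_prod_type_right',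
        Equiv.sum_comp e.symm fun b => if g b (Nat.pair i (b i)) ≠ 0 then 1 else 0]

lemma rowSample_congr {m : ℕ} {b b' : Fin k → Fin n} {v : Fin m → Fin k}
    (h : ∀ t, b (v t) = b' (v t)) : rowSample b v = rowSample b' v := by
  simp [rowSample, rowPoint, h]

lemma le_sum_errorCount {m : ℕ} {A : List (ℕ × ℕ) → ℕ → ℕ}
    (hA : ∀ S, RealizableSeq hypClass S → PropLe hypClass (A S) p) (v : Fin m → Fin k) :
    (k - m) * (n ^ (k - 1) * (n - p)) ≤ ∑ b : Fin k → Fin n, errorCount (A (rowSample b v)) b := by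
  set unseen := (univ.image v)ᶜ
  have hunseen : k - m ≤ #unseen := by
    have := card_le_univ (univ.image v)
    rw [card_compl, Fintype.card_fin]
    have := (card_image_le (s := univ) (f := v)).trans_eq (card_fin m)
    omega
  have hcol (i : Fin k) (hi : i ∈ unseen) : n ^ (k - 1) * (n - p) ≤
      #{b : Fin k → Fin n | A (rowSample b v) (Nat.pair i (b i)) ≠ 0} := by
    refine le_card_filter_ne_zero i _ (fun b b' hbb' => ?_)
      fun b => hA _ (realizableSeq_rowSample b v)
    refine congrArg A (rowSample_congr fun t => hbb' _ fun hvt => ?_)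
    exact mem_compl.1 hi (hvt ▸ mem_image_of_mem v (mem_univ t))
  calc (k - m) * (n ^ (k - 1) * (n - p)) ≤ ∑ _i ∈ unseen, n ^ (k - 1) * (n - p) := by
        rw [sum_const, smul_eq_mul]; exact Nat.mul_le_mul_right _ hunseen
    _ ≤ ∑ i ∈ unseen, #{b : Fin k → Fin n | A (rowSample b v) (Nat.pair i (b i)) ≠ 0} :=
        sum_le_sum hcol
    _ ≤ ∑ i : Fin k, #{b : Fin k → Fin n | A (rowSample b v) (Nat.pair i (b i)) ≠ 0} :=
        sum_le_sum_of_subset (subset_univ _)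
    _ = ∑ b : Fin k → Fin n, errorCount (A (rowSample b v)) b := by
        simp only [errorCount, card_filter]
        exact sum_comm

end Counting

lemma pow_mul_pow_succ_le {k n m p : ℕ} (hk : k ≠ 0) (h : n * k ≤ (k - m) * (n - p) * 2) :
    n ^ k * k ^ (m + 1) ≤ k ^ m * ((k - m) * (n ^ (k - 1) * (n - p))) * 2 := by
  have hpow : n ^ k = n ^ (k - 1) * n := by rw [← pow_succ, Nat.sub_add_cancel (by omega)]
  calc n ^ k * k ^ (m + 1) = k ^ m * n ^ (k - 1) * (n * k) := by rw [hpow, pow_succ]; ring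
    _ ≤ k ^ m * n ^ (k - 1) * ((k - m) * (n - p) * 2) := Nat.mul_le_mul_left _ h
    _ = k ^ m * ((k - m) * (n ^ (k - 1) * (n - p))) * 2 := by ring

lemma exists_lintegral_error_ge_half {p : ℕ} {A : List (ℕ × ℕ) → ℕ → ℕ}
    (hA : ∀ S, RealizableSeq hypClass S → PropLe hypClass (A S) p) (m : ℕ) :
    ∃ b : Fin (4 * (m + 1)) → Fin (4 * (p + 1)), 1 / 2 ≤
      ∫⁻ S : Fin m → ℕ × ℕ, targetDist b {q | A (List.ofFn S) q.1 ≠ q.2}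
        ∂(Measure.pi fun _ => targetDist b) := by
  set k := 4 * (m + 1) with hk
  set n := 4 * (p + 1) with hn
  set C := k ^ m * ((k - m) * (n ^ (k - 1) * (n - p)))
  have harith : n ^ k * k ^ (m + 1) ≤ C * 2 := by
    refine pow_mul_pow_succ_le (by omega) ?_
    rw [show k - m = 3 * m + 4 by omega, show n - p = 3 * p + 4 by omega, hk, hn]
    nlinarith
  have hcount : C ≤ ∑ b : Fin k → Fin n, ∑ v : Fin m → Fin k, errorCount (A (rowSample b v)) b := by
    rw [sum_comm]
    calc C = ∑ _v : Fin m → Fin k, (k - m) * (n ^ (k - 1) * (n - p)) := by simp [C]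
      _ ≤ _ := sum_le_sum fun v _ => le_sum_errorCount hA v
  refine (ENNReal.exists_le_of_sum_le (univ_nonempty (α := Fin k → Fin n))
    (f := fun _ => 1 / 2) ?_).imp fun b hb => hb.2
  calc ∑ _b : Fin k → Fin n, (1 / 2 : ℝ≥0∞) = (n ^ k : ℕ) / 2 := by simp [div_eq_mul_inv]
    _ ≤ (C : ℝ≥0∞) / (k ^ (m + 1) : ℕ) := by
      rw [ENNReal.le_div_iff_mul_le (Or.inl (by positivity)) (Or.inl (natCast_ne_top _)),
        mul_comm, ← mul_div_assoc, ENNReal.div_le_iff two_ne_zero ofNat_ne_top, mul_comm]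
      exact_mod_cast harith
    _ ≤ (∑ b : Fin k → Fin n, ∑ v : Fin m → Fin k, errorCount (A (rowSample b v)) b : ℕ) /
          (k ^ (m + 1) : ℕ) := ENNReal.div_le_div_right (by exact_mod_cast hcount) _
    _ = ∑ b : Fin k → Fin n, ∑ v : Fin m → Fin k,
          (errorCount (A (rowSample b v)) b / k * (k : ℝ≥0∞)⁻¹ ^ m) := by
      simp only [Nat.cast_sum, div_eq_mul_inv, sum_mul]
      refine sum_congr rfl fun b _ => sum_congr rfl fun v _ => ?_
      rw [Nat.cast_pow, ENNReal.inv_pow, pow_succ']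
      ring
    _ ≤ _ := sum_le_sum fun b _ => lintegral_targetDist_error_ge A b

end NoFiniteProperness

end

/-- There are countably infinite sets `X`, `Y` (here realized as `ℕ`) and a
hypothesis class `H ⊆ Y^X` of DS dimension exactly `1` (some single point is DS-shattered and
no pair of points is DS-shattered, hence no larger tuple) such that every learner `A` with
finite properness number w.r.t. `H` fails badly: for every sample size `m` there is an
`H`-realizable distribution `D` on which the expected error of `A` is at least `1/2`.  In
particular every learner achieving expected error below `1/2` — a fortiori every PAC learner
for `H` — has infinite properness number. -/
theorem no_finite_properness_learner :
    ∃ H : Set (ℕ → ℕ),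
      (∃ xs : Fin 1 → ℕ, DSShatters H xs) ∧
      (∀ xs : Fin 2 → ℕ, ¬ DSShatters H xs) ∧
      ∀ A : List (ℕ × ℕ) → ℕ → ℕ,
        (∃ p : ℕ, ∀ S : List (ℕ × ℕ), RealizableSeq H S → PropLe H (A S) p) →
        ∀ m : ℕ, ∃ D : Measure (ℕ × ℕ),
          IsProbabilityMeasure D ∧ RealizableDist H D ∧
          (1 : ℝ≥0∞) / 2 ≤
            ∫⁻ S : Fin m → ℕ × ℕ,
              D {p : ℕ × ℕ | A (List.ofFn S) p.1 ≠ p.2}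
              ∂(Measure.pi fun _ : Fin m => D) := by
  refine ⟨NoFiniteProperness.hypClass, NoFiniteProperness.exists_dsShatters_one,
    NoFiniteProperness.not_dsShatters_two, ?_⟩
  rintro A ⟨p, hA⟩ m
  obtain ⟨b, hb⟩ := NoFiniteProperness.exists_lintegral_error_ge_half hA m
  exact ⟨NoFiniteProperness.targetDist b, inferInstance,
    NoFiniteProperness.realizableDist_targetDist b, hb⟩
end

section
/- Fix d ≥ 1 and a finite set X = [n] with n ≥ 1, and let H be the first Cantor class on X with parameter d. Then the DS dimension of H equals 1: no pair of points of X is DS-shattered by H, while every single point is DS-shattered (e.g. by {h_∅, h_{\{x\}}}). -/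
open scoped Classical

/-!
A single point `x` is DS-shattered by `{h_∅, h_{x}}`. For two or more points, note that a
Cantor hypothesis `h_B` is recovered from any of its values other than `*`. If `h_B(x_i) ≠ *`,
then the neighbour of `h_B` in a direction `j ≠ i` agrees with it at `x_i`, hence equals `h_B`,
which is absurd. So every hypothesis of a shattering family is `*` on all the points, and then
no hypothesis has a neighbour at all.
-/

lemma eq_of_cantorHyp_apply_eq {n : ℕ} {A B : Finset (Fin n)} {x : Fin n}
    (h : cantorHyp A x = cantorHyp B x) (hx : cantorHyp A x ≠ none) : A = B := by
  unfold cantorHyp at h hx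
  split_ifs at h hx <;> simp_all

lemma dsShatters_fin_one_of_apply_ne {X Y : Type*} {H : Set (X → Y)} {xs : Fin 1 → X}
    {f g : X → Y} (hf : f ∈ H) (hg : g ∈ H) (hfg : f (xs 0) ≠ g (xs 0)) :
    DSShatters H xs := by
  refine ⟨Function.injective_of_subsingleton xs, {f, g}, ?_, Finset.insert_nonempty f {g}, ?_⟩
  · simpa [Set.insert_subset_iff] using ⟨hf, hg⟩
  · intro h hh i
    obtain rfl : i = 0 := Subsingleton.elim i 0
    have hno_other (j : Fin 1) (hj : j ≠ 0) : False := hj (Subsingleton.elim j 0)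
    rcases Finset.mem_insert.mp hh with rfl | hh
    · exact ⟨g, by simp, hfg.symm, fun j hj => (hno_other j hj).elim⟩
    · obtain rfl := Finset.mem_singleton.mp hh
      exact ⟨f, by simp, hfg, fun j hj => (hno_other j hj).elim⟩

theorem dsShatters_cantorClass_fin_one {n d : ℕ} (hd : 1 ≤ d) (xs : Fin 1 → Fin n) :
    DSShatters (cantorClass n d) xs :=
  dsShatters_fin_one_of_apply_ne (f := cantorHyp ∅) (g := cantorHyp {xs 0})
    ⟨∅, by simp, rfl⟩ ⟨{xs 0}, by simpa using hd, rfl⟩ (by simp [cantorHyp])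

theorem not_dsShatters_cantorClass {n d m : ℕ} (hm : 2 ≤ m) (xs : Fin m → Fin n) :
    ¬ DSShatters (cantorClass n d) xs := by
  have : Nontrivial (Fin m) := Fin.nontrivial_iff_two_le.mpr hm
  rintro ⟨-, F, hFH, ⟨h₀, hh₀⟩, hF⟩
  have hstar : ∀ h ∈ F, ∀ i, h (xs i) = none := by
    intro h hh i
    by_contra hne
    obtain ⟨B, -, rfl⟩ := hFH hh
    obtain ⟨j, hji⟩ := exists_ne i
    obtain ⟨g, hg, hgj, hgi⟩ := hF _ hh j
    obtain ⟨C, -, rfl⟩ := hFH hg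
    obtain rfl := eq_of_cantorHyp_apply_eq (hgi i hji.symm).symm hne
    exact hgj rfl
  obtain ⟨g, hg, hne, -⟩ := hF h₀ hh₀ ⟨0, by omega⟩
  exact hne ((hstar g hg _).trans (hstar h₀ hh₀ _).symm)

theorem cantor_ds_dimension_one_general (d n : ℕ) (hd : 1 ≤ d) :
    (∀ xs : Fin 1 → Fin n, DSShatters (cantorClass n d) xs) ∧
    (∀ xs : Fin 2 → Fin n, ¬ DSShatters (cantorClass n d) xs) :=
  ⟨dsShatters_cantorClass_fin_one hd, not_dsShatters_cantorClass le_rfl⟩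

/-- The DS dimension of the first Cantor class equals `1`: every single
point of `[n]` is DS-shattered, while no pair of points is DS-shattered. -/
theorem cantor_ds_dimension_one (d n : ℕ) (hd : 1 ≤ d) (hn : 1 ≤ n) :
    (∀ xs : Fin 1 → Fin n, DSShatters (cantorClass n d) xs) ∧
    (∀ xs : Fin 2 → Fin n, ¬ DSShatters (cantorClass n d) xs) :=
  cantor_ds_dimension_one_general d n hd
end

section
/- Fix d ≥ 1 and a finite set X = [n] with n ≥ d, and let H be the first Cantor class on X with parameter d. Then the Graph dimension of H equals d: any d distinct points x_1,…,x_d of X together with the labels y_i = * are Graph-shattered by H, and no set of d+1 examples is Graph-shattered by H. -/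
open scoped Classical

/-- `H` Graph-shatters the examples `e 0, …, e (d-1)`. -/
def GraphShatters {X Y : Type*} (H : Set (X → Y)) {d : ℕ} (e : Fin d → X × Y) : Prop :=
  ∀ b : Fin d → Bool, ∃ h ∈ H, ∀ i : Fin d, (h (e i).1 = (e i).2 ↔ b i = true)

lemma cantorHyp_eq_none {n : ℕ} (A : Finset (Fin n)) (x : Fin n) :
    cantorHyp A x = none ↔ x ∉ A := by
  unfold cantorHyp; split <;> simp_all

lemma cantorHyp_eq_some {n : ℕ} (A B : Finset (Fin n)) (x : Fin n)
    (h : cantorHyp A x = some B) : A = B ∧ x ∈ A := by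
  unfold cantorHyp at h; split at h <;> simp_all

lemma card_contra {d n : ℕ} (A : Finset (Fin n)) (hA : A.card ≤ d)
    (xs : Fin (d + 1) → Fin n) (hinj : Function.Injective xs)
    (hmem : ∀ i, xs i ∈ A) : False := by
  have h1 : (Finset.univ.image xs) ⊆ A := by
    intro x hx
    simp only [Finset.mem_image] at hx
    obtain ⟨i, _, rfl⟩ := hx
    exact hmem i
  have h2 := Finset.card_le_card h1
  rw [Finset.card_image_of_injective _ hinj, Finset.card_univ, Fintype.card_fin] at h2
  omega

/-- The Graph dimension of the first Cantor class with parameter `d` on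
`[n]` (`n ≥ d`) equals `d`: any `d` distinct points, each labeled `*`, are Graph-shattered,
while no set of `d + 1` examples is Graph-shattered. -/
theorem cantor_graph_dimension (d n : ℕ) (hd : 1 ≤ d) (hn : d ≤ n) :
    (∀ xs : Fin d → Fin n, Function.Injective xs →
      GraphShatters (cantorClass n d)
        (fun i => (xs i, (none : Option (Finset (Fin n)))))) ∧
    (∀ e : Fin (d + 1) → Fin n × Option (Finset (Fin n)), Function.Injective e →
      ¬ GraphShatters (cantorClass n d) e) := by
  constructor
  · intro xs hinj b
    set A : Finset (Fin n) := (Finset.univ.filter (fun i => b i = false)).image xs with hAdef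
    have hmem : ∀ i, xs i ∈ A ↔ b i = false := by
      intro i
      simp only [hAdef, Finset.mem_image, Finset.mem_filter, Finset.mem_univ, true_and]
      constructor
      · rintro ⟨j, hj, hji⟩; rwa [hinj hji] at hj
      · intro h; exact ⟨i, h, rfl⟩
    refine ⟨cantorHyp A, ⟨A, ?_, rfl⟩, ?_⟩
    · calc A.card ≤ (Finset.univ.filter (fun i => b i = false)).card :=
            Finset.card_image_le
        _ ≤ (Finset.univ : Finset (Fin d)).card := Finset.card_filter_le _ _
        _ = d := by simp
    · intro i
      simp only []
      rw [cantorHyp_eq_none, hmem]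
      cases b i <;> simp
  · intro e hinj hsh
    obtain ⟨h, ⟨A, hAcard, rfl⟩, hall⟩ := hsh (fun _ => true)
    have hsat : ∀ i, cantorHyp A (e i).1 = (e i).2 := fun i => (hall i).2 rfl
    have hxinj : Function.Injective (fun i => (e i).1) := by
      intro i j hij
      apply hinj
      have hij' : (e i).1 = (e j).1 := hij
      have := hsat i
      rw [hij'] at this
      rw [hsat j] at this
      exact Prod.ext hij' this.symm
    by_cases hT : ∃ i B, (e i).2 = some B
    · obtain ⟨i0, B, hi0⟩ := hT
      have hAB : A = B ∧ (e i0).1 ∈ A := cantorHyp_eq_some A B _ (by rw [hsat i0, hi0])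
      by_cases hall_mem : ∀ i, (e i).1 ∈ A
      · exact card_contra A hAcard _ hxinj hall_mem
      · push_neg at hall_mem
        obtain ⟨j, hj⟩ := hall_mem
        have hjnone : (e j).2 = none := by
          rw [← hsat j, (cantorHyp_eq_none A _).2 hj]
        obtain ⟨h', ⟨A', hA'card, rfl⟩, hall'⟩ := hsh (fun i => if i = j then false else true)
        have hij0 : i0 ≠ j := by
          intro hh; rw [hh, hjnone] at hi0; exact nomatch hi0
        have h1 : cantorHyp A' (e i0).1 = some B := by
          rw [(hall' i0).2 (by simp [hij0]), hi0]
        have hA'B : A' = B := (cantorHyp_eq_some A' B _ h1).1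
        have h2 : cantorHyp A' (e j).1 ≠ (e j).2 := by
          intro hh
          have := (hall' j).1 hh
          simp at this
        rw [hjnone] at h2
        have : (e j).1 ∈ A' := by
          by_contra hc
          exact h2 ((cantorHyp_eq_none A' _).2 hc)
        rw [hA'B, ← hAB.1] at this
        exact hj this
    · push_neg at hT
      obtain ⟨h', ⟨A', hA'card, rfl⟩, hall'⟩ := hsh (fun _ => false)
      refine card_contra A' hA'card _ hxinj (fun i => ?_)
      have h2 : cantorHyp A' (e i).1 ≠ (e i).2 := by
        intro hh
        have := (hall' i).1 hh
        simp at this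
      by_contra hc
      apply h2
      rw [(cantorHyp_eq_none A' _).2 hc]
      cases hy : (e i).2 with
      | none => rfl
      | some B => exact absurd hy (hT i B)
end

section
/- Let {X_d}_{d≥1} be pairwise disjoint finite sets with |X_d| = d, let X = ⋃_d X_d, and let Y = {$} ∪ ⋃_d ({*} ∪ 2^{X_d}) with $ a fresh symbol. For A ⊆ X_d define h_A : X → Y by h_A(x) = A if x ∈ A, h_A(x) = * if x ∈ X_d \ A, and h_A(x) = $ if x ∉ X_d. Let H = ⋃_{d≥1} { h_A : A ⊆ X_d, |A| = d − ⌊√d⌋ }. Then the DS dimension of H equals 1: no pair of distinct points of X is DS-shattered by H. -/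
open scoped Classical

/-- The domain `X = ⋃_{d ≥ 1} X_d`, where the blocks `X_d` (of size `d`) are realized as the
fibers of a sigma type. -/
abbrev CantorInfX : Type := Σ d : ℕ+, Fin (d : ℕ)

/-- The label space `Y = {$} ∪ ⋃_d ({*} ∪ 2^{X_d})`: `none` encodes `$`, `some none`
encodes `*`, and `some (some A)` encodes the finite set `A`. -/
abbrev CantorInfY : Type := Option (Option (Finset CantorInfX))

/-- The hypothesis `h_A` for `A ⊆ X_d`: it outputs `A` on points of `A`, `*` on the rest of
the block `X_d`, and `$` outside `X_d`. -/
noncomputable def cantorInfHyp (d : ℕ+) (A : Finset CantorInfX) : CantorInfX → CantorInfY :=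
  fun x => if x ∈ A then some (some A) else if x.1 = d then some none else none

/-- The class `H = ⋃_{d ≥ 1} {h_A : A ⊆ X_d, |A| = d - ⌊√d⌋}`. -/
noncomputable def cantorInfClass : Set (CantorInfX → CantorInfY) :=
  {h | ∃ (d : ℕ+) (A : Finset CantorInfX),
    (∀ a ∈ A, a.1 = d) ∧ A.card = (d : ℕ) - Nat.sqrt (d : ℕ) ∧ h = cantorInfHyp d A}

/-- Value of `h_A` off `A`. -/
lemma cantorInfHyp_not_mem {d : ℕ+} {A : Finset CantorInfX} {x : CantorInfX} (hx : x ∉ A) :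
    cantorInfHyp d A x = if x.1 = d then some none else none := by
  simp [cantorInfHyp, hx]

/-- A hypothesis is determined by its value at any point of its set. -/
lemma cantorInfHyp_eq_of_mem {d d' : ℕ+} {A A' : Finset CantorInfX} {x : CantorInfX}
    (hA : ∀ a ∈ A, a.1 = d) (hA' : ∀ a ∈ A', a.1 = d')
    (hx : x ∈ A) (heq : cantorInfHyp d A x = cantorInfHyp d' A' x) :
    cantorInfHyp d A = cantorInfHyp d' A' := by
  have h1 : cantorInfHyp d A x = some (some A) := by simp [cantorInfHyp, hx]
  rw [h1] at heq
  by_cases hx' : x ∈ A'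
  · have h2 : cantorInfHyp d' A' x = some (some A') := by simp [cantorInfHyp, hx']
    rw [h2] at heq
    obtain rfl : A = A' := by simpa using heq
    obtain rfl : d = d' := by rw [← hA x hx, hA' x hx']
    rfl
  · exfalso
    rw [cantorInfHyp_not_mem hx'] at heq
    split_ifs at heq <;> simp at heq

/-- The DS dimension of the class `H` from the properness lower bound
equals `1`: some single point is DS-shattered, and no pair of distinct points of `X` is
DS-shattered. -/
theorem cantor_inf_ds_dimension_one :
    (∃ xs : Fin 1 → CantorInfX, DSShatters cantorInfClass xs) ∧
    (∀ xs : Fin 2 → CantorInfX, ¬ DSShatters cantorInfClass xs) := by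
  constructor
  · -- single point is shattered
    set p : CantorInfX := ⟨2, 0⟩ with hp
    set q : CantorInfX := ⟨2, 1⟩ with hq
    have hpq : p ∉ ({q} : Finset CantorInfX) := by
      simp [hp, hq]
      intro h
      exact absurd (congrArg Fin.val (eq_of_heq h)) (by decide)
    have hpp : p ∈ ({p} : Finset CantorInfX) := Finset.mem_singleton_self p
    set h1 := cantorInfHyp 2 {p} with hh1
    set h2 := cantorInfHyp 2 {q} with hh2
    have hv1 : h1 p = some (some {p}) := by simp [hh1, cantorInfHyp, hpp]
    have hv2 : h2 p = some none := by
      rw [hh2, cantorInfHyp_not_mem hpq, if_pos rfl]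
    have hne : h1 p ≠ h2 p := by rw [hv1, hv2]; simp
    have hmem1 : h1 ∈ cantorInfClass := ⟨2, {p}, by simp [hp], by rw [Finset.card_singleton]; norm_num, rfl⟩
    have hmem2 : h2 ∈ cantorInfClass := ⟨2, {q}, by simp [hq], by rw [Finset.card_singleton]; norm_num, rfl⟩
    refine ⟨fun _ => p, fun a b _ => Subsingleton.elim a b, {h1, h2}, ?_, ⟨h1, by simp⟩, ?_⟩
    · intro h hh
      simp only [Finset.coe_insert, Finset.coe_singleton, Set.mem_insert_iff,
        Set.mem_singleton_iff] at hh
      rcases hh with rfl | rfl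
      · exact hmem1
      · exact hmem2
    · intro h hh i
      rcases Finset.mem_insert.mp hh with rfl | hh
      · exact ⟨h2, by simp, hne.symm, fun j hj => absurd (Subsingleton.elim j i) hj⟩
      · rw [Finset.mem_singleton] at hh
        subst hh
        exact ⟨h1, by simp, hne, fun j hj => absurd (Subsingleton.elim j i) hj⟩
  · -- no pair is shattered
    rintro xs ⟨-, F, hFH, ⟨h0, h0F⟩, hprop⟩
    -- Step A: for every `h = h_{d,A} ∈ F`, neither point lies in `A`.
    have stepA : ∀ h ∈ F, ∀ (d : ℕ+) (A : Finset CantorInfX), (∀ a ∈ A, a.1 = d) →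
        h = cantorInfHyp d A → xs 0 ∉ A ∧ xs 1 ∉ A := by
      intro h hF d A hA hEq
      subst hEq
      constructor
      · intro hx
        obtain ⟨g, hgF, hg2, hg1⟩ := hprop _ hF 1
        obtain ⟨d', A', hA', -, rfl⟩ := hFH hgF
        have hagree := hg1 0 (by decide)
        have : cantorInfHyp d A = cantorInfHyp d' A' :=
          cantorInfHyp_eq_of_mem hA hA' hx hagree.symm
        rw [← this] at hg2
        exact hg2 rfl
      · intro hx
        obtain ⟨g, hgF, hg2, hg1⟩ := hprop _ hF 0
        obtain ⟨d', A', hA', -, rfl⟩ := hFH hgF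
        have hagree := hg1 1 (by decide)
        have : cantorInfHyp d A = cantorInfHyp d' A' :=
          cantorInfHyp_eq_of_mem hA hA' hx hagree.symm
        rw [← this] at hg2
        exact hg2 rfl
    -- hence the values at both points are determined by a single block index
    have val : ∀ h ∈ F, ∃ d : ℕ+,
        h (xs 0) = (if (xs 0).1 = d then some none else none) ∧
        h (xs 1) = (if (xs 1).1 = d then some none else none) := by
      intro h hF
      obtain ⟨d, A, hA, -, rfl⟩ := hFH hF
      obtain ⟨hx0, hx1⟩ := stepA _ hF d A hA rfl
      exact ⟨d, cantorInfHyp_not_mem hx0, cantorInfHyp_not_mem hx1⟩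
    -- Claim C: no `g ∈ F` can output `*` at `xs 0`.
    have claimC : ∀ g ∈ F, g (xs 0) = some none → False := by
      intro g hgF hval
      obtain ⟨g', hg'F, hne, hagree⟩ := hprop _ hgF 1
      have h01 := hagree 0 (by decide)
      obtain ⟨d, hv0, hv1⟩ := val _ hgF
      obtain ⟨d', hv0', hv1'⟩ := val _ hg'F
      have hd : (xs 0).1 = d := by
        by_contra hc
        rw [hv0, if_neg hc] at hval
        simp at hval
      have hd' : (xs 0).1 = d' := by
        by_contra hc
        rw [hv0', if_neg hc, hval] at h01
        simp at h01
      obtain rfl : d = d' := hd ▸ hd'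
      rw [hv1, hv1'] at hne
      exact hne rfl
    -- Claim D: some `g ∈ F` outputs `*` at `xs 0`, contradiction.
    obtain ⟨d0, hv0, -⟩ := val _ h0F
    by_cases hc : (xs 0).1 = d0
    · exact claimC _ h0F (by rw [hv0, if_pos hc])
    · obtain ⟨g, hgF, hne, -⟩ := hprop _ h0F 0
      obtain ⟨d, hg0, -⟩ := val _ hgF
      have hh0 : h0 (xs 0) = none := by rw [hv0, if_neg hc]
      by_cases hc' : (xs 0).1 = d
      · exact claimC _ hgF (by rw [hg0, if_pos hc'])
      · exact hne (by rw [hg0, if_neg hc', hh0])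
end

section
/- Let n > d ≥ 1 be integers and let N_1,…,N_{n−d} be independent random variables where N_i is geometric with success probability (n−i+1)/n, i.e., P[N_i = k] = (1 − (n−i+1)/n)^{k−1}·(n−i+1)/n for integers k ≥ 1. Let N = Σ_{i=1}^{n−d} N_i. Then P[ N ≥ n·( ln((n+1)/(d+1)) − √(2/d) ) ] ≥ 1/2. -/
open MeasureTheory ProbabilityTheory ENNReal
open scoped Classical

section Geom

variable {Ω : Type} [MeasurableSpace Ω]

lemma geom_lint (μ : Measure Ω) (X : Ω → ℕ) (hX : Measurable X) (g : ℕ → ℝ≥0∞) :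
    ∫⁻ ω, g (X ω) ∂μ = ∑' k, g k * μ {ω | X ω = k} := by
  rw [← lintegral_map (f := g) measurable_from_top hX, lintegral_countable']
  refine tsum_congr fun k => ?_
  rw [Measure.map_apply hX (measurableSet_singleton k)]
  rfl

lemma geom_moments (μ : Measure Ω) [IsProbabilityMeasure μ] (X : Ω → ℕ) (hX : Measurable X)
    (p : ℝ) (hp0 : 0 < p) (hp1 : p ≤ 1)
    (h : ∀ k : ℕ, 1 ≤ k → μ {ω | X ω = k} = ENNReal.ofReal ((1 - p) ^ (k - 1) * p)) :
    MemLp (fun ω => (X ω : ℝ)) 2 μ ∧ (∫ ω, (X ω : ℝ) ∂μ) = 1 / p ∧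
      variance (fun ω => (X ω : ℝ)) μ ≤ 1 / p ^ 2 := by
  set q : ℝ := 1 - p with hq
  have hq0 : 0 ≤ q := by simp [hq]; linarith
  have hqn : ‖q‖ < 1 := by
    rw [Real.norm_eq_abs, abs_of_nonneg hq0]; simp [hq]; linarith
  have hpq : 1 - q = p := by simp [hq]
  have hs1 : HasSum (fun j : ℕ => ((j : ℝ) + 1) * q ^ j) (1 / p ^ 2) := by
    have A := hasSum_choose_mul_geometric_of_norm_lt_one 1 hqn (𝕜 := ℝ)
    rw [hpq] at A
    have hfe : (fun n : ℕ => (((n + 1).choose 1 : ℕ) : ℝ) * q ^ n)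
        = fun n : ℕ => ((n : ℝ) + 1) * q ^ n := funext fun n => by
      simp [Nat.choose_one_right]
    rw [hfe] at A
    have hv : (1:ℝ) / p ^ (1 + 1) = 1 / p ^ 2 := by norm_num
    rwa [hv] at A
  have hs2 : HasSum (fun j : ℕ => ((j : ℝ) + 1) * ((j : ℝ) + 2) * q ^ j) (2 / p ^ 3) := by
    have h2 := (hasSum_choose_mul_geometric_of_norm_lt_one 2 hqn (𝕜 := ℝ)).mul_left 2
    rw [hpq] at h2
    have hfe : (fun n : ℕ => 2 * ((((n + 2).choose 2 : ℕ) : ℝ) * q ^ n))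
        = fun n : ℕ => ((n : ℝ) + 1) * ((n : ℝ) + 2) * q ^ n := funext fun j => by
      have hnat : 2 * ((j + 2).choose 2) = (j + 1) * (j + 2) := by
        rw [Nat.choose_two_right, show j + 2 - 1 = j + 1 by omega,
          Nat.mul_comm (j + 2) (j + 1), Nat.mul_div_cancel' (Nat.even_mul_succ_self (j+1)).two_dvd]
      have hc := congrArg (fun x : ℕ => (x : ℝ)) hnat
      push_cast at hc
      rw [← mul_assoc, hc]
    rw [hfe] at h2
    have hv : 2 * ((1:ℝ) / p ^ (2 + 1)) = 2 / p ^ 3 := by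
      rw [mul_one_div]
    rwa [hv] at h2
  have hs1' : HasSum (fun j : ℕ => ((j : ℝ) + 1) * q ^ j * p) (1 / p) := by
    have := hs1.mul_right p
    convert this using 1
    · rfl
    field_simp
  have hs2' : HasSum (fun j : ℕ => ((j : ℝ) + 1) ^ 2 * q ^ j * p) ((2 / p ^ 2 - 1 / p)) := by
    have := (hs2.sub hs1).mul_right p
    convert this using 1
    · rfl
    · funext j; ring
    · field_simp
  have hterm : ∀ j : ℕ, μ {ω | X ω = j + 1} = ENNReal.ofReal (q ^ j * p) := by
    intro j
    rw [h (j + 1) (by omega)]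
    simp [hq]
  have hE1 : ∫⁻ ω, ((X ω : ℕ) : ℝ≥0∞) ∂μ = ENNReal.ofReal (1 / p) := by
    rw [geom_lint μ X hX (fun k => (k : ℝ≥0∞)), tsum_eq_zero_add' ENNReal.summable]
    simp only [Nat.cast_zero, zero_mul, zero_add]
    have : ∀ j : ℕ, ((j + 1 : ℕ) : ℝ≥0∞) * μ {ω | X ω = j + 1}
        = ENNReal.ofReal (((j : ℝ) + 1) * q ^ j * p) := by
      intro j
      rw [hterm j, ← ENNReal.ofReal_natCast (j + 1), ← ENNReal.ofReal_mul (by positivity)]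
      congr 1
      push_cast
      ring
    simp_rw [this]
    rw [← ENNReal.ofReal_tsum_of_nonneg (fun j => by positivity) hs1'.summable, hs1'.tsum_eq]
  have hE2 : ∫⁻ ω, ((X ω : ℕ) : ℝ≥0∞) ^ 2 ∂μ = ENNReal.ofReal (2 / p ^ 2 - 1 / p) := by
    rw [geom_lint μ X hX (fun k => (k : ℝ≥0∞) ^ 2), tsum_eq_zero_add' ENNReal.summable]
    simp only [Nat.cast_zero, ne_eq, OfNat.ofNat_ne_zero, not_false_eq_true, zero_pow, zero_mul,
      zero_add]
    have : ∀ j : ℕ, ((j + 1 : ℕ) : ℝ≥0∞) ^ 2 * μ {ω | X ω = j + 1}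
        = ENNReal.ofReal (((j : ℝ) + 1) ^ 2 * q ^ j * p) := by
      intro j
      rw [hterm j, ← ENNReal.ofReal_natCast (j + 1), ← ENNReal.ofReal_pow (by positivity),
        ← ENNReal.ofReal_mul (by positivity)]
      congr 1
      push_cast
      ring
    simp_rw [this]
    rw [← ENNReal.ofReal_tsum_of_nonneg (fun j => by positivity) hs2'.summable, hs2'.tsum_eq]
  have hmeasX : Measurable (fun ω => ((X ω : ℕ) : ℝ)) := measurable_from_top.comp hX
  have hofr : ∀ ω, ENNReal.ofReal (((X ω : ℕ) : ℝ) ^ 2) = ((X ω : ℕ) : ℝ≥0∞) ^ 2 := by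
    intro ω
    rw [ENNReal.ofReal_pow (by positivity), ENNReal.ofReal_natCast]
  have hi2 : Integrable (fun ω => ((X ω : ℕ) : ℝ) ^ 2) μ := by
    refine ⟨(hmeasX.pow_const 2).aestronglyMeasurable, ?_⟩
    rw [hasFiniteIntegral_iff_ofReal (ae_of_all _ fun ω => by positivity)]
    simp_rw [hofr]
    rw [hE2]
    exact ENNReal.ofReal_lt_top
  have hmem : MemLp (fun ω => ((X ω : ℕ) : ℝ)) 2 μ :=
    (memLp_two_iff_integrable_sq hmeasX.aestronglyMeasurable).2 hi2
  have hint : (∫ ω, ((X ω : ℕ) : ℝ) ∂μ) = 1 / p := by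
    rw [integral_eq_lintegral_of_nonneg_ae (ae_of_all _ fun ω => Nat.cast_nonneg _)
      hmeasX.aestronglyMeasurable]
    simp_rw [ENNReal.ofReal_natCast]
    rw [hE1, ENNReal.toReal_ofReal (by positivity)]
  have h2nonneg : (0:ℝ) ≤ 2 / p ^ 2 - 1 / p := by
    have h1 : 1 / p ≤ 2 / p ^ 2 := by
      rw [div_le_div_iff₀ (by positivity) (by positivity)]
      nlinarith
    linarith
  have hint2 : (∫ ω, ((X ω : ℕ) : ℝ) ^ 2 ∂μ) = 2 / p ^ 2 - 1 / p := by
    rw [integral_eq_lintegral_of_nonneg_ae (ae_of_all _ fun ω => by positivity)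
      (hmeasX.pow_const 2).aestronglyMeasurable]
    simp_rw [hofr]
    rw [hE2, ENNReal.toReal_ofReal h2nonneg]
  refine ⟨hmem, hint, ?_⟩
  rw [variance_eq_sub hmem]
  have : (∫ ω, ((fun ω => ((X ω : ℕ) : ℝ)) ^ 2) ω ∂μ) = 2 / p ^ 2 - 1 / p := by
    simpa [Pi.pow_apply] using hint2
  rw [this, hint]
  have hp' : 0 ≤ 1 / p := by positivity
  calc 2 / p ^ 2 - 1 / p - (1 / p) ^ 2 = 1 / p ^ 2 - 1 / p := by field_simp; ring
    _ ≤ 1 / p ^ 2 := by linarith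

end Geom

/-- Coupon-collector anti-concentration: if `N_1, …, N_{n-d}` are
independent, `N_i` geometric on `{1, 2, …}` with success probability `(n - i + 1)/n` (here
indexed by `i : Fin (n-d)` so that the success probability is `(n - i)/n`), and `N = Σ N_i`,
then `P[N ≥ n·(ln((n+1)/(d+1)) − √(2/d))] ≥ 1/2`. -/
theorem coupon_collector_anticoncentration (n d : ℕ) (hd : 1 ≤ d) (hdn : d < n)
    (Ω : Type) [MeasurableSpace Ω] (μ : Measure Ω) [IsProbabilityMeasure μ]
    (N : Fin (n - d) → Ω → ℕ) (hmeas : ∀ i, Measurable (N i))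
    (hindep : iIndepFun N μ)
    (hgeom : ∀ (i : Fin (n - d)) (k : ℕ), 1 ≤ k →
      μ {ω | N i ω = k} =
        ENNReal.ofReal
          ((1 - ((n - (i : ℕ) : ℕ) : ℝ) / n) ^ (k - 1) * (((n - (i : ℕ) : ℕ) : ℝ) / n))) :
    (1 : ℝ≥0∞) / 2 ≤
      μ {ω | (n : ℝ) * (Real.log (((n : ℝ) + 1) / ((d : ℝ) + 1)) - Real.sqrt (2 / d)) ≤
        ((∑ i, N i ω : ℕ) : ℝ)} := by
  have hn0 : (0 : ℝ) < n := by
    have : 0 < n := by omega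
    exact_mod_cast this
  have hd0 : (0 : ℝ) < d := by exact_mod_cast hd
  have hib : ∀ i : Fin (n - d), d + 1 ≤ n - (i : ℕ) ∧ (i : ℕ) < n := by
    intro i
    have := i.2
    omega
  have hcast : ∀ i : Fin (n - d), ((n - (i : ℕ) : ℕ) : ℝ) = (n : ℝ) - (i : ℕ) := by
    intro i
    have h1 : (i : ℕ) ≤ n := (hib i).2.le
    push_cast [Nat.cast_sub h1]
    ring
  have hsub0 : ∀ i : Fin (n - d), (d : ℝ) + 1 ≤ (n : ℝ) - (i : ℕ) := by
    intro i
    rw [← hcast i]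
    exact_mod_cast (hib i).1
  have hp0 : ∀ i : Fin (n - d), 0 < ((n - (i : ℕ) : ℕ) : ℝ) / n := by
    intro i
    have := hsub0 i
    rw [hcast i]
    apply div_pos _ hn0
    linarith
  have hp1 : ∀ i : Fin (n - d), ((n - (i : ℕ) : ℕ) : ℝ) / n ≤ 1 := by
    intro i
    rw [div_le_one hn0]
    exact_mod_cast Nat.sub_le n (i : ℕ)
  have moments := fun i : Fin (n - d) =>
    geom_moments μ (N i) (hmeas i) (((n - (i : ℕ) : ℕ) : ℝ) / n) (hp0 i) (hp1 i) (hgeom i)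
  set X : Fin (n - d) → Ω → ℝ := fun i ω => (N i ω : ℝ) with hXdef
  have hMem : ∀ i, MemLp (X i) 2 μ := fun i => (moments i).1
  have hEi : ∀ i, (∫ ω, X i ω ∂μ) = (n : ℝ) / ((n : ℝ) - (i : ℕ)) := by
    intro i
    have h := (moments i).2.1
    rw [one_div_div, hcast i] at h
    exact h
  have hVi : ∀ i, variance (X i) μ ≤ (n : ℝ) ^ 2 / ((n : ℝ) - (i : ℕ)) ^ 2 := by
    intro i
    have h := (moments i).2.2
    rwa [div_pow, one_div_div, hcast i] at h
  have hSmem : MemLp (∑ i, X i) 2 μ := memLp_finset_sum' _ fun i _ => hMem i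
  have hES : μ[∑ i, X i] = ∑ i : Fin (n - d), (n : ℝ) / ((n : ℝ) - (i : ℕ)) := by
    have h1 : μ[∑ i, X i] = ∫ ω, ∑ i, X i ω ∂μ := by
      congr 1
      funext ω
      simp [Finset.sum_apply]
    rw [h1, integral_finset_sum _ fun i _ => (hMem i).integrable one_le_two]
    exact Finset.sum_congr rfl fun i _ => hEi i
  have hVS : variance (∑ i, X i) μ ≤ ∑ i : Fin (n - d), (n : ℝ) ^ 2 / ((n : ℝ) - (i : ℕ)) ^ 2 := by
    rw [IndepFun.variance_sum (fun i _ => hMem i) ?pair]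
    · exact Finset.sum_le_sum fun i _ => hVi i
    case pair =>
      intro i _ j _ hij
      exact (hindep.comp (fun _ (k : ℕ) => (k : ℝ)) fun _ => measurable_from_top).indepFun hij
  -- telescoping lower bound for the mean
  have hlog : (n : ℝ) * Real.log (((n : ℝ) + 1) / ((d : ℝ) + 1))
      ≤ ∑ i : Fin (n - d), (n : ℝ) / ((n : ℝ) - (i : ℕ)) := by
    set G : ℕ → ℝ := fun i => Real.log ((n : ℝ) + 1 - i) with hG
    have tele : ∑ i ∈ Finset.range (n - d), (G i - G (i + 1)) = G 0 - G (n - d) :=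
      Finset.sum_range_sub' G (n - d)
    have hper : ∀ i ∈ Finset.range (n - d),
        (n : ℝ) * (G i - G (i + 1)) ≤ (n : ℝ) / ((n : ℝ) - i) := by
      intro i hi
      rw [Finset.mem_range] at hi
      have hbge : (d : ℝ) + 1 ≤ (n : ℝ) - i := by
        have h1 : d + 1 ≤ n - i := by omega
        have h2 : (i : ℕ) ≤ n := by omega
        have := (Nat.cast_le (α := ℝ)).2 h1
        push_cast [Nat.cast_sub h2] at this
        linarith
      have hb : (0 : ℝ) < (n : ℝ) - i := by linarith
      have ha : (0 : ℝ) < (n : ℝ) + 1 - i := by linarith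
      have hstep : G i - G (i + 1) ≤ 1 / ((n : ℝ) - i) := by
        have hGi1 : G (i + 1) = Real.log ((n : ℝ) - i) := by
          simp only [hG]
          congr 1
          push_cast
          ring
        rw [hGi1, hG]
        simp only
        rw [← Real.log_div ha.ne' hb.ne']
        have hld := Real.log_le_sub_one_of_pos (div_pos ha hb)
        have heq : ((n : ℝ) + 1 - i) / ((n : ℝ) - i) - 1 = 1 / ((n : ℝ) - i) := by
          field_simp
          ring
        linarith
      calc (n : ℝ) * (G i - G (i + 1)) ≤ (n : ℝ) * (1 / ((n : ℝ) - i)) :=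
            mul_le_mul_of_nonneg_left hstep hn0.le
        _ = (n : ℝ) / ((n : ℝ) - i) := by rw [mul_one_div]
    have hG0 : G 0 = Real.log ((n : ℝ) + 1) := by simp [hG]
    have hGm : G (n - d) = Real.log ((d : ℝ) + 1) := by
      simp only [hG]
      congr 1
      have : ((n - d : ℕ) : ℝ) = (n : ℝ) - d := by
        push_cast [Nat.cast_sub hdn.le]
        ring
      rw [this]
      ring
    calc (n : ℝ) * Real.log (((n : ℝ) + 1) / ((d : ℝ) + 1))
        = (n : ℝ) * (G 0 - G (n - d)) := by
          rw [hG0, hGm, Real.log_div (by positivity) (by positivity)]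
      _ = ∑ i ∈ Finset.range (n - d), (n : ℝ) * (G i - G (i + 1)) := by
          rw [← Finset.mul_sum, tele]
      _ ≤ ∑ i ∈ Finset.range (n - d), (n : ℝ) / ((n : ℝ) - i) :=
          Finset.sum_le_sum hper
      _ = ∑ i : Fin (n - d), (n : ℝ) / ((n : ℝ) - (i : ℕ)) :=
          (Fin.sum_univ_eq_sum_range (fun j : ℕ => (n : ℝ) / ((n : ℝ) - j)) (n - d)).symm
  -- telescoping upper bound for the variance
  have hvarsum : ∑ i : Fin (n - d), (n : ℝ) ^ 2 / ((n : ℝ) - (i : ℕ)) ^ 2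
      ≤ (n : ℝ) ^ 2 / d := by
    set H : ℕ → ℝ := fun i => 1 / ((n : ℝ) - i) with hH
    have tele : ∑ i ∈ Finset.range (n - d), (H (i + 1) - H i) = H (n - d) - H 0 :=
      Finset.sum_range_sub H (n - d)
    have hper : ∀ i ∈ Finset.range (n - d),
        (n : ℝ) ^ 2 / ((n : ℝ) - i) ^ 2 ≤ (n : ℝ) ^ 2 * (H (i + 1) - H i) := by
      intro i hi
      rw [Finset.mem_range] at hi
      have hbge : (d : ℝ) + 1 ≤ (n : ℝ) - i := by
        have h1 : d + 1 ≤ n - i := by omega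
        have h2 : (i : ℕ) ≤ n := by omega
        have := (Nat.cast_le (α := ℝ)).2 h1
        push_cast [Nat.cast_sub h2] at this
        linarith
      have hb : (0 : ℝ) < (n : ℝ) - i := by linarith
      have hb1 : (0 : ℝ) < (n : ℝ) - i - 1 := by linarith
      have hH1 : H (i + 1) = 1 / ((n : ℝ) - i - 1) := by
        simp only [hH]
        congr 1
        push_cast
        ring
      have hkey : 1 / ((n : ℝ) - i) ^ 2 ≤ H (i + 1) - H i := by
        rw [hH1, hH]
        simp only
        have h1 : 1 / ((n : ℝ) - i) ^ 2 ≤ 1 / (((n : ℝ) - i - 1) * ((n : ℝ) - i)) := by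
          apply one_div_le_one_div_of_le (by positivity)
          nlinarith
        have h2 : 1 / (((n : ℝ) - i - 1) * ((n : ℝ) - i))
            = 1 / ((n : ℝ) - i - 1) - 1 / ((n : ℝ) - i) := by
          field_simp
          ring
        linarith
      calc (n : ℝ) ^ 2 / ((n : ℝ) - i) ^ 2 = (n : ℝ) ^ 2 * (1 / ((n : ℝ) - i) ^ 2) := by
            rw [mul_one_div]
        _ ≤ (n : ℝ) ^ 2 * (H (i + 1) - H i) :=
            mul_le_mul_of_nonneg_left hkey (by positivity)
    have hH0 : H 0 = 1 / (n : ℝ) := by simp [hH]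
    have hHm : H (n - d) = 1 / (d : ℝ) := by
      simp only [hH]
      congr 1
      have : ((n - d : ℕ) : ℝ) = (n : ℝ) - d := by
        push_cast [Nat.cast_sub hdn.le]
        ring
      rw [this]
      ring
    calc ∑ i : Fin (n - d), (n : ℝ) ^ 2 / ((n : ℝ) - (i : ℕ)) ^ 2
        = ∑ i ∈ Finset.range (n - d), (n : ℝ) ^ 2 / ((n : ℝ) - i) ^ 2 :=
          Fin.sum_univ_eq_sum_range (fun j : ℕ => (n : ℝ) ^ 2 / ((n : ℝ) - j) ^ 2) (n - d)
      _ ≤ ∑ i ∈ Finset.range (n - d), (n : ℝ) ^ 2 * (H (i + 1) - H i) :=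
          Finset.sum_le_sum hper
      _ = (n : ℝ) ^ 2 * (H (n - d) - H 0) := by rw [← Finset.mul_sum, tele]
      _ ≤ (n : ℝ) ^ 2 / d := by
          rw [hHm, hH0]
          rw [mul_sub, mul_one_div, mul_one_div]
          have : (0 : ℝ) ≤ (n : ℝ) ^ 2 / n := by positivity
          linarith
  -- Chebyshev
  have hsq : (0 : ℝ) < 2 / d := by positivity
  have hc0 : (0 : ℝ) < (n : ℝ) * Real.sqrt (2 / d) :=
    mul_pos hn0 (Real.sqrt_pos.2 hsq)
  have hc2 : ((n : ℝ) * Real.sqrt (2 / d)) ^ 2 = 2 * (n : ℝ) ^ 2 / d := by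
    rw [mul_pow, Real.sq_sqrt hsq.le]
    ring
  have hcheb := meas_ge_le_variance_div_sq (μ := μ) hSmem hc0
  have hhalf : variance (∑ i, X i) μ / ((n : ℝ) * Real.sqrt (2 / d)) ^ 2 ≤ 1 / 2 := by
    rw [div_le_iff₀ (by positivity)]
    have he : (1 : ℝ) / 2 * ((n : ℝ) * Real.sqrt (2 / d)) ^ 2 = (n : ℝ) ^ 2 / d := by
      rw [hc2]; ring
    rw [he]
    exact hVS.trans hvarsum
  -- conclusion
  set T : ℝ := (n : ℝ) * (Real.log (((n : ℝ) + 1) / ((d : ℝ) + 1)) - Real.sqrt (2 / d)) with hT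
  have hTle : T ≤ μ[∑ i, X i] - (n : ℝ) * Real.sqrt (2 / d) := by
    have h1 : (n : ℝ) * Real.log (((n : ℝ) + 1) / ((d : ℝ) + 1)) ≤ μ[∑ i, X i] := by
      rw [hES]; exact hlog
    rw [hT, mul_sub]
    linarith
  have hsetEq : {ω | T ≤ ((∑ i, N i ω : ℕ) : ℝ)} = {ω | T ≤ ∑ i, X i ω} := by
    ext ω
    simp only [Set.mem_setOf_eq, hXdef]
    push_cast
    rfl
  have hsub : {ω | T ≤ ∑ i, X i ω}ᶜ ⊆
      {ω | (n : ℝ) * Real.sqrt (2 / d) ≤ |(∑ i, X i) ω - μ[∑ i, X i]|} := by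
    intro ω hω
    simp only [Set.mem_compl_iff, Set.mem_setOf_eq, not_le] at hω ⊢
    have h1 : (∑ i, X i) ω = ∑ i, X i ω := by simp [Finset.sum_apply]
    rw [h1, abs_sub_comm]
    have h2 : (n : ℝ) * Real.sqrt (2 / d) ≤ μ[∑ i, X i] - ∑ i, X i ω := by linarith
    exact h2.trans (le_abs_self _)
  have hSmeas : Measurable fun ω => ∑ i, X i ω :=
    Finset.measurable_sum _ fun i _ => measurable_from_top.comp (hmeas i)
  have hAmeas : MeasurableSet {ω | T ≤ ∑ i, X i ω} :=
    measurableSet_le measurable_const hSmeas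
  have hcompl : μ {ω | T ≤ ∑ i, X i ω}ᶜ ≤ 1 / 2 := by
    refine le_trans (measure_mono hsub) (le_trans hcheb ?_)
    refine le_trans (ENNReal.ofReal_le_ofReal hhalf) ?_
    rw [ENNReal.ofReal_div_of_pos (by norm_num)]
    simp
  rw [hsetEq]
  have h1 : μ {ω | T ≤ ∑ i, X i ω} + μ {ω | T ≤ ∑ i, X i ω}ᶜ = 1 := by
    rw [measure_add_measure_compl hAmeas]
    exact measure_univ
  have h2 : (1 : ℝ≥0∞) ≤ μ {ω | T ≤ ∑ i, X i ω} + 1 / 2 :=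
    calc (1 : ℝ≥0∞) = μ {ω | T ≤ ∑ i, X i ω} + μ {ω | T ≤ ∑ i, X i ω}ᶜ := h1.symm
      _ ≤ μ {ω | T ≤ ∑ i, X i ω} + 1 / 2 := add_le_add_right hcompl _
  have h4 : (1 : ℝ≥0∞) - 1 / 2 ≤ μ {ω | T ≤ ∑ i, X i ω} := tsub_le_iff_right.2 h2
  rwa [ENNReal.sub_half ENNReal.one_ne_top] at h4
end

section
/- Fix d ≥ 1 and a finite set X = [n] with n ≥ d, let H be the first Cantor class on X with parameter d, and let f* = h_∅ be the all-* hypothesis. Then: (i) for every training sequence S all of whose labels are * (i.e., consistent with f*), A_bad(S) is an element of H consistent with S, so A_bad is an ERM learner on f*-realizable sequences; and (ii) for every such S and every x ∈ [d] that does not appear as a feature in S, A_bad(S)(x) ≠ * — hence for every sub-training sequence S' of S, every x ∈ [d] unseen in S satisfies A_bad(S')(x) ≠ *. -/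
open scoped Classical

lemma aux1 {n : ℕ} : ∀ (l : List (Fin n)) (a : Fin n), (a::l).Pairwise (· < ·) →
    ∀ i (hi : i < l.length), a.val + i < (l[i]).val := by
  intro l
  induction l with
  | nil => intro a _ i hi; simp at hi
  | cons b t ih =>
    intro a hs i hi
    have hab : a < b := (List.pairwise_cons.1 hs).1 b (by simp)
    match i with
    | 0 => simpa using hab
    | (i+1) =>
      have hbt : (b::t).Pairwise (· < ·) := hs.of_cons
      have hti : i < t.length := by simpa using hi
      have := ih b hbt i hti
      simp only [List.getElem_cons_succ]
      omega

lemma aux2 {n : ℕ} : ∀ (l : List (Fin n)), l.Pairwise (· < ·) →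
    ∀ i (hi : i < l.length), i ≤ (l[i]).val := by
  intro l hs i hi
  match l, i with
  | a::t, 0 => simp
  | a::t, (i+1) =>
    have := aux1 t a hs i (by simpa using hi)
    simp only [List.getElem_cons_succ]
    omega

lemma key {d n : ℕ} (u : Finset (Fin n)) (x : Fin n) (hxu : x ∈ u) (hxd : (x:ℕ) < d) :
    x ∈ ((u.sort (· ≤ ·)).take d).toFinset := by
  set l := u.sort (· ≤ ·) with hl
  have hsl : l.Pairwise (· < ·) := u.sortedLT_sort.pairwise
  have hml : x ∈ l := (Finset.mem_sort _).2 hxu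
  obtain ⟨i, hi, hx⟩ := List.getElem_of_mem hml
  have hid : i < d := by have := aux2 l hsl i hi; omega
  have hlen : i < (l.take d).length := by simp [hid, hi]
  have : (l.take d)[i] = x := by rw [List.getElem_take]; exact hx
  rw [List.mem_toFinset, ← this]
  exact List.getElem_mem hlen

lemma badSet_mem {d n : ℕ} (S : List (Fin n × Option (Finset (Fin n))))
    (x : Fin n) (hxd : (x:ℕ) < d) (hun : ∀ p ∈ S, p.1 ≠ x) : x ∈ badSet d S :=
  key _ _ (by simp only [unseenSet, Finset.mem_filter, Finset.mem_univ, true_and]; exact hun) hxd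

lemma badSet_card {d n : ℕ} (S : List (Fin n × Option (Finset (Fin n)))) :
    (badSet d S).card ≤ d :=
  le_trans (List.toFinset_card_le _) (by simpa using List.length_take_le d _)

lemma badSet_unseen {d n : ℕ} (S : List (Fin n × Option (Finset (Fin n))))
    (x : Fin n) (hx : x ∈ badSet d S) : ∀ p ∈ S, p.1 ≠ x := by
  have : x ∈ unseenSet S := by
    have := List.mem_toFinset.1 hx
    have := List.mem_of_mem_take this
    exact (Finset.mem_sort _).1 this
  simpa [unseenSet] using this

/-- (i) On every training sequence `S` all of whose labels are `*`
(i.e., consistent with the all-`*` hypothesis `f*`), `A_bad` outputs a member of the first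
Cantor class consistent with `S` — so `A_bad` is an ERM learner on `f*`-realizable
sequences; and (ii) for every `x ∈ [d]` not appearing as a feature in `S`,
`A_bad(S)(x) ≠ *`, and likewise `A_bad(S')(x) ≠ *` for every sub-training sequence `S'`
of `S`. -/
theorem abad_is_bad_erm (d n : ℕ) (hd : 1 ≤ d) (hdn : d ≤ n)
    (S : List (Fin n × Option (Finset (Fin n)))) (hS : ∀ p ∈ S, p.2 = none) :
    (Abad d S ∈ cantorClass n d ∧ ∀ p ∈ S, Abad d S p.1 = p.2) ∧
    (∀ x : Fin n, (x : ℕ) < d → (∀ p ∈ S, p.1 ≠ x) → Abad d S x ≠ none) ∧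
    (∀ S' : List (Fin n × Option (Finset (Fin n))), (∀ p ∈ S', p ∈ S) →
      ∀ x : Fin n, (x : ℕ) < d → (∀ p ∈ S, p.1 ≠ x) → Abad d S' x ≠ none) := by
  have hbad : ∀ (T : List (Fin n × Option (Finset (Fin n)))) (x : Fin n),
      (x : ℕ) < d → (∀ p ∈ T, p.1 ≠ x) → Abad d T x ≠ none := by
    intro T x hxd hun
    have hx := badSet_mem T x hxd hun
    simp [Abad, cantorHyp, hx]
  refine ⟨⟨⟨badSet d S, badSet_card S, rfl⟩, ?_⟩, hbad S, ?_⟩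
  · intro p hp
    have hnp : p.1 ∉ badSet d S := fun h => badSet_unseen S p.1 h p hp rfl
    simp [Abad, cantorHyp, hnp, hS p hp]
  · intro S' hS' x hxd hun
    exact hbad S' x hxd fun p hp => hun p (hS' p hp)
end
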